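/- arXiv:1202.4732 — 9 statements merged into one kernel-verified Lean document; each statement's English description precedes it below -/
import Mathlib

section
/- Let S be a unitary ring, not necessarily commutative, let M and N be left S-modules, and let X be a subset of M. Suppose that R is a unitary subring of S, that X is an R-submodule of M, and that the natural map S ⊗_R X → M sending ∑_i s_i ⊗ x_i to ∑_i s_i x_i is injective. Then Hom_{(S)}(X, N) = Hom_R(X, N); that is, a map ℓ : X → N lies in Hom_{(S)}(X, N) if and only if ℓ is R-linear. -/
set_option synthInstance.maxHeartbeats 400000

open scoped TensorProduct

/-- `IsQuasiHom S X ℓ` says that the map `ℓ : X → N`, defined on the subset `X` of the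
left `S`-module `M`, satisfies: for every finite collection of elements `s i ∈ S` and
`x i ∈ X` with `∑ i, s i • x i = 0` in `M`, one has `∑ i, s i • ℓ (x i) = 0` in `N`.
This is the set `Hom_{(S)}(X, N)` of the paper. -/
def IsQuasiHom (S : Type*) [Ring S] {M N : Type*} [AddCommGroup M] [Module S M]
    [AddCommGroup N] [Module S N] (X : Set M) (ℓ : X → N) : Prop :=
  ∀ (n : ℕ) (s : Fin n → S) (x : Fin n → X),
    ∑ i, s i • (x i : M) = 0 → ∑ i, s i • ℓ (x i) = 0

variable (S : Type*) [Ring S] (M : Type*) [AddCommGroup M] [Module S M]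
  (R : Subring S) (X : Submodule R M)

/-- The natural additive map `S ⊗_ℤ X → M`, `s ⊗ x ↦ s • x`.  The tensor product
`S ⊗_R X` over the (possibly noncommutative) subring `R` is the quotient of `S ⊗_ℤ X`
by the submodule `tensorRelations` below, so the natural map `S ⊗_R X → M`,
`∑ sᵢ ⊗ xᵢ ↦ ∑ sᵢ xᵢ`, is injective if and only if the kernel of `tensorEval` is
contained in `tensorRelations`. -/
noncomputable def tensorEval : S ⊗[ℤ] X →ₗ[ℤ] M :=
  TensorProduct.lift
    { toFun := fun s =>
        { toFun := fun x => s • (x : M)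
          map_add' := fun x y => by simp [smul_add]
          map_smul' := fun z x => by
            have h : ((z • x : X) : M) = z • (x : M) := map_zsmul X.subtype z x
            simp only [RingHom.id_apply]
            rw [h, smul_comm] }
      map_add' := fun s t => LinearMap.ext fun x => by simp [add_smul]
      map_smul' := fun z s => LinearMap.ext fun x => by
        simp only [RingHom.id_apply, LinearMap.coe_mk, AddHom.coe_mk, LinearMap.smul_apply]
        rw [zsmul_eq_mul, mul_smul, Int.cast_smul_eq_zsmul] }

/-- The `ℤ`-submodule of `S ⊗_ℤ X` generated by the elements `(s * r) ⊗ x - s ⊗ (r • x)`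
for `s ∈ S`, `r ∈ R`, `x ∈ X`; the quotient of `S ⊗_ℤ X` by it is the balanced tensor
product `S ⊗_R X`. -/
def tensorRelations : Submodule ℤ (S ⊗[ℤ] X) :=
  Submodule.span ℤ
    {w : S ⊗[ℤ] X | ∃ (s : S) (r : R) (x : X), w = (s * (r : S)) ⊗ₜ[ℤ] x - s ⊗ₜ[ℤ] (r • x)}


noncomputable def tensorEvalN (N : Type*) [AddCommGroup N] [Module S N]
    (φ : X →ₗ[R] N) : S ⊗[ℤ] X →ₗ[ℤ] N :=
  TensorProduct.lift
    { toFun := fun s =>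
        { toFun := fun x => s • φ x
          map_add' := fun x y => by simp [smul_add]
          map_smul' := fun z x => by
            simp only [RingHom.id_apply]
            rw [map_zsmul φ z x, smul_comm] }
      map_add' := fun s t => LinearMap.ext fun x => by simp [add_smul]
      map_smul' := fun z s => LinearMap.ext fun x => by
        simp only [RingHom.id_apply, LinearMap.coe_mk, AddHom.coe_mk, LinearMap.smul_apply]
        rw [zsmul_eq_mul, mul_smul, Int.cast_smul_eq_zsmul] }

/-- Let `S` be a unitary ring (not necessarily commutative), `M` and `N`
left `S`-modules, `R` a unitary subring of `S`, and `X` an `R`-submodule of `M` such that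
the natural map `S ⊗_R X → M`, `∑ sᵢ ⊗ xᵢ ↦ ∑ sᵢ xᵢ`, is injective (expressed here as:
the kernel of the map `S ⊗_ℤ X → M` is contained in the defining relations of the
balanced tensor product `S ⊗_R X`).  Then `Hom_{(S)}(X, N) = Hom_R(X, N)`: a map
`ℓ : X → N` lies in `Hom_{(S)}(X, N)` if and only if it is `R`-linear. -/
theorem statement1 (N : Type*) [AddCommGroup N] [Module S N]
    (hinj : ∀ z : S ⊗[ℤ] X, tensorEval S M R X z = 0 → z ∈ tensorRelations S M R X)
    (ℓ : X → N) :
    IsQuasiHom S (X : Set M) ℓ ↔ ∃ φ : X →ₗ[R] N, ∀ x : X, φ x = ℓ x := by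
  constructor
  · intro hq
    refine ⟨{ toFun := ℓ, map_add' := ?_, map_smul' := ?_ }, fun x => rfl⟩
    · intro x y
      have h := hq 3 ![1, -1, -1] ![x + y, x, y] (by
        simp [Fin.sum_univ_three])
      simp [Fin.sum_univ_three] at h
      rwa [add_assoc, ← neg_add, add_neg_eq_zero] at h
    · intro r x
      have h := hq 2 ![(r : S), -1] ![x, r • x] (by
        simp [Fin.sum_univ_two, Subring.smul_def])
      simp only [Fin.sum_univ_two, Matrix.cons_val_zero, Matrix.cons_val_one, Matrix.head_cons,
        neg_smul, one_smul, neg_one_smul] at h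
      rw [add_neg_eq_zero] at h
      simp only [RingHom.id_apply, Subring.smul_def]
      exact h.symm
  · rintro ⟨φ, hφ⟩ n s x hx
    have hz : tensorEval S M R X (∑ i, s i ⊗ₜ[ℤ] (x i : X)) = 0 := by
      rw [map_sum]
      simp only [map_sum, tensorEval, TensorProduct.lift.tmul, LinearMap.coe_mk,
        AddHom.coe_mk]
      exact hx
    have hmem := hinj _ hz
    have hker : tensorRelations S M R X ≤ LinearMap.ker (tensorEvalN S M R X N φ) := by
      rw [tensorRelations, Submodule.span_le]
      rintro w ⟨a, r, y, rfl⟩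
      rw [SetLike.mem_coe, LinearMap.mem_ker, map_sub]
      have ht : ∀ (a : S) (y : X), tensorEvalN S M R X N φ (a ⊗ₜ[ℤ] y) = a • φ y :=
        fun a y => TensorProduct.lift.tmul _ _
      rw [ht, ht]
      simp only [SetLike.mem_coe, LinearMap.mem_ker, map_sub, tensorEvalN,
        TensorProduct.lift.tmul, LinearMap.coe_mk, AddHom.coe_mk, map_smul,
        Subring.smul_def, mul_smul, sub_self]
    have h0 : tensorEvalN S M R X N φ (∑ i, s i ⊗ₜ[ℤ] (x i : X)) = 0 := hker hmem
    rw [map_sum] at h0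
    have ht : ∀ (a : S) (y : X), tensorEvalN S M R X N φ (a ⊗ₜ[ℤ] y) = a • φ y :=
      fun a y => TensorProduct.lift.tmul _ _
    have h0' : ∑ i, s i • φ (x i) = 0 := by
      rw [← h0]; exact Finset.sum_congr rfl fun i _ => (ht (s i) (x i)).symm
    simpa [hφ] using h0'
end

section
/- Let S be a unitary ring, not necessarily commutative, let M and N be left S-modules, let R be a unitary subring of S, and let X be an R-submodule of M such that the natural map S ⊗_R X → M sending ∑_i s_i ⊗ x_i to ∑_i s_i x_i is injective. Then the restriction of maps to X induces a bijection from Hom_S(SX, N), the set of S-linear maps SX → N, onto Hom_R(X, N), the set of R-linear maps X → N, where SX denotes the S-submodule of M generated by X. -/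
set_option synthInstance.maxHeartbeats 400000

open scoped TensorProduct

variable (S : Type*) [Ring S] (M : Type*) [AddCommGroup M] [Module S M]
  (R : Subring S) (X : Submodule R M)

noncomputable def tensorEvalG (N : Type*) [AddCommGroup N] [Module S N] (g : X →ₗ[R] N) :
    S ⊗[ℤ] X →ₗ[ℤ] N :=
  TensorProduct.lift
    { toFun := fun s =>
        { toFun := fun x => s • g x
          map_add' := fun x y => by simp [smul_add]
          map_smul' := fun z x => by
            simp only [RingHom.id_apply, map_zsmul]
            rw [smul_comm] }
      map_add' := fun s t => LinearMap.ext fun x => by simp [add_smul]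
      map_smul' := fun z s => LinearMap.ext fun x => by
        simp only [RingHom.id_apply, LinearMap.coe_mk, AddHom.coe_mk, LinearMap.smul_apply]
        rw [zsmul_eq_mul, mul_smul, Int.cast_smul_eq_zsmul] }

@[simp] lemma tensorEval_tmul (s : S) (x : X) :
    tensorEval S M R X (s ⊗ₜ[ℤ] x) = s • (x : M) := rfl

@[simp] lemma tensorEvalG_tmul (N : Type*) [AddCommGroup N] [Module S N] (g : X →ₗ[R] N)
    (s : S) (x : X) : tensorEvalG S M R X N g (s ⊗ₜ[ℤ] x) = s • g x := rfl

lemma tensorEval_rTensor (s : S) (z : S ⊗[ℤ] X) :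
    tensorEval S M R X (LinearMap.rTensor X (LinearMap.mulLeft ℤ s) z)
      = s • tensorEval S M R X z := by
  induction z using TensorProduct.induction_on with
  | zero => simp
  | tmul t x => simp [mul_smul]
  | add a b ha hb => simp [ha, hb, smul_add]

lemma tensorEvalG_rTensor (N : Type*) [AddCommGroup N] [Module S N] (g : X →ₗ[R] N)
    (s : S) (z : S ⊗[ℤ] X) :
    tensorEvalG S M R X N g (LinearMap.rTensor X (LinearMap.mulLeft ℤ s) z)
      = s • tensorEvalG S M R X N g z := by
  induction z using TensorProduct.induction_on with
  | zero => simp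
  | tmul t x => simp [mul_smul]
  | add a b ha hb => simp [ha, hb, smul_add]

lemma tensorEval_surj : ∀ m ∈ Submodule.span S (X : Set M),
    ∃ z : S ⊗[ℤ] X, tensorEval S M R X z = m := by
  intro m hm
  induction hm using Submodule.span_induction with
  | mem x hx => exact ⟨(1 : S) ⊗ₜ[ℤ] ⟨x, hx⟩, by simp⟩
  | zero => exact ⟨0, by simp⟩
  | add a b _ _ ha hb =>
    obtain ⟨za, hza⟩ := ha; obtain ⟨zb, hzb⟩ := hb
    exact ⟨za + zb, by simp [hza, hzb]⟩
  | smul s a _ ha =>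
    obtain ⟨z, hz⟩ := ha
    exact ⟨LinearMap.rTensor X (LinearMap.mulLeft ℤ s) z, by
      rw [tensorEval_rTensor, hz]⟩

lemma tensorEvalG_relations (N : Type*) [AddCommGroup N] [Module S N] (g : X →ₗ[R] N) :
    ∀ z ∈ tensorRelations S M R X, tensorEvalG S M R X N g z = 0 := by
  intro z hz
  induction hz using Submodule.span_induction with
  | mem w hw =>
    obtain ⟨s, r, x, rfl⟩ := hw
    have : g (r • x) = (r : S) • g x := g.map_smul r x
    simp [this, mul_smul]
  | zero => simp
  | add a b _ _ ha hb => simp [ha, hb]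
  | smul n a _ ha => simp [ha]

/-- Let `S` be a unitary ring (not necessarily commutative), `M` and `N`
left `S`-modules, `R` a unitary subring of `S`, and `X` an `R`-submodule of `M` such that
the natural map `S ⊗_R X → M`, `∑ sᵢ ⊗ xᵢ ↦ ∑ sᵢ xᵢ`, is injective (expressed here as:
the kernel of the map `S ⊗_ℤ X → M` is contained in the defining relations of the
balanced tensor product `S ⊗_R X`).  Then restriction of maps to `X` induces a bijection
from `Hom_S(SX, N)` onto `Hom_R(X, N)`, where `SX = Submodule.span S X` is the
`S`-submodule of `M` generated by `X`: the restriction to `X` of every `S`-linear map on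
`SX` is `R`-linear, and every `R`-linear map `X → N` is the restriction of a unique
`S`-linear map `SX → N`. -/
theorem statement3 (N : Type*) [AddCommGroup N] [Module S N]
    (hinj : ∀ z : S ⊗[ℤ] X, tensorEval S M R X z = 0 → z ∈ tensorRelations S M R X) :
    (∀ φ : Submodule.span S (X : Set M) →ₗ[S] N, ∃ g : X →ₗ[R] N,
        ∀ x : X, g x = φ ⟨x, Submodule.subset_span x.2⟩) ∧
    (∀ g : X →ₗ[R] N, ∃! φ : Submodule.span S (X : Set M) →ₗ[S] N,
        ∀ x : X, φ ⟨x, Submodule.subset_span x.2⟩ = g x) := by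
  constructor
  · intro φ
    refine ⟨{ toFun := fun x => φ ⟨x, Submodule.subset_span x.2⟩,
              map_add' := fun x y => by
                show φ ⟨((x + y : X) : M), _⟩ = φ ⟨x, _⟩ + φ ⟨y, _⟩
                rw [← map_add]
                rfl
              map_smul' := fun r x => by
                show φ ⟨((r • x : X) : M), _⟩ = r • φ ⟨x, _⟩
                have h : (⟨((r • x : X) : M), Submodule.subset_span (r • x).2⟩ :
                    Submodule.span S (X : Set M)) =
                    (r : S) • ⟨x, Submodule.subset_span x.2⟩ := rfl
                rw [h, map_smul]
                rfl }, fun x => rfl⟩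
  · intro g
    have key : ∀ z z' : S ⊗[ℤ] X, tensorEval S M R X z = tensorEval S M R X z' →
        tensorEvalG S M R X N g z = tensorEvalG S M R X N g z' := by
      intro z z' h
      have h0 : tensorEval S M R X (z - z') = 0 := by rw [map_sub, h, sub_self]
      have := tensorEvalG_relations S M R X N g _ (hinj _ h0)
      rw [map_sub, sub_eq_zero] at this
      exact this
    choose zof hzof using tensorEval_surj S M R X
    refine ⟨{ toFun := fun m => tensorEvalG S M R X N g (zof m.1 m.2),
              map_add' := fun m₁ m₂ => by
                beta_reduce
                rw [← map_add]
                exact key _ _ (by rw [map_add, hzof, hzof, hzof]; rfl),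
              map_smul' := fun s m => by
                simp only [RingHom.id_apply]
                rw [← tensorEvalG_rTensor]
                exact key _ _ (by rw [tensorEval_rTensor, hzof, hzof]; rfl) }, ?_, ?_⟩
    · intro x
      show tensorEvalG S M R X N g (zof x _) = g x
      have : tensorEvalG S M R X N g ((1 : S) ⊗ₜ[ℤ] x) = g x := by simp
      rw [← this]
      exact key _ _ (by rw [hzof]; simp)
    · intro φ hφ
      ext m
      obtain ⟨m, hm⟩ := m
      show φ ⟨m, hm⟩ = tensorEvalG S M R X N g (zof m hm)
      induction hm using Submodule.span_induction with
      | mem x hx =>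
        have h1 : φ ⟨x, Submodule.subset_span hx⟩ = g ⟨x, hx⟩ := hφ ⟨x, hx⟩
        have h2 : tensorEvalG S M R X N g ((1 : S) ⊗ₜ[ℤ] (⟨x, hx⟩ : X)) = g ⟨x, hx⟩ := by simp
        rw [h1, ← h2]
        exact (key _ _ (by rw [hzof]; simp)).symm
      | zero =>
        have : tensorEvalG S M R X N g (0 : S ⊗[ℤ] X) = 0 := by simp
        rw [show (⟨0, Submodule.zero_mem _⟩ : Submodule.span S (X : Set M)) = 0 from rfl,
          map_zero, ← this]
        exact (key _ _ (by rw [hzof]; simp)).symm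
      | add a b ha hb iha ihb =>
        rw [show (⟨a + b, Submodule.add_mem _ ha hb⟩ : Submodule.span S (X : Set M)) =
            ⟨a, ha⟩ + ⟨b, hb⟩ from rfl, map_add, iha, ihb, ← map_add]
        exact key _ _ (by rw [map_add, hzof, hzof, hzof])
      | smul s a ha iha =>
        rw [show (⟨s • a, Submodule.smul_mem _ s ha⟩ : Submodule.span S (X : Set M)) =
            s • ⟨a, ha⟩ from rfl, map_smul, iha, ← tensorEvalG_rTensor]
        exact key _ _ (by rw [tensorEval_rTensor, hzof, hzof])
end

section
/- Let A be a Dedekind domain which is not a field, with field of fractions F, and let p0 be a prime ideal of A which is either the zero ideal or a maximal ideal. Then there is an isomorphism of A-modules A_{(p0)}/A ≅ ⨁_p F_p/A_p, where the direct sum is extended over all maximal ideals p ≠ p0 of A. -/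
open IsDedekindDomain
open scoped DirectSum

variable (A : Type*) [CommRing A] [IsDedekindDomain A]
  (F : Type*) [Field F] [Algebra A F] [IsFractionRing A F]

/-- The ring of integers `A_p` of the completion `F_p` of `F` at a maximal ideal `p`
(a height-one prime `v` of the Dedekind domain `A`), viewed as an `A`-submodule of
`F_p`; the quotient module is `F_p/A_p`. -/
noncomputable def integersSubmodule (v : HeightOneSpectrum A) :
    Submodule A (v.adicCompletion F) where
  carrier := (v.adicCompletionIntegers F : Set (v.adicCompletion F))
  zero_mem' := zero_mem _
  add_mem' := fun hx hy => add_mem hx hy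
  smul_mem' := fun a x hx => (a • (⟨x, hx⟩ : v.adicCompletionIntegers F)).2

namespace Statement4Aux

open scoped Multiplicative Classical
open IsDedekindDomain.HeightOneSpectrum

variable {R : Type*} [CommRing R] [IsDedekindDomain R]
  {K : Type*} [Field K] [Algebra R K] [IsFractionRing R K]

open UniqueFactorizationMonoid in
theorem dvd_of_intValuation_le {a s : R} (hs : s ≠ 0)
    (h : ∀ v : HeightOneSpectrum R, v.intValuationDef a ≤ v.intValuationDef s) : s ∣ a := by
  classical
  rcases eq_or_ne a 0 with rfl | ha
  · exact dvd_zero s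
  rw [← Ideal.span_singleton_le_span_singleton, ← Ideal.dvd_iff_le,
    dvd_iff_normalizedFactors_le_normalizedFactors
      (by simpa using hs) (by simpa using ha), Multiset.le_iff_count]
  intro P
  by_cases hP : P ∈ normalizedFactors (Ideal.span {s})
  · have hPprime : Prime P := prime_of_normalized_factor P hP
    have hPne : P ≠ ⊥ := hPprime.ne_zero
    let v : HeightOneSpectrum R := ⟨P, Ideal.isPrime_of_prime hPprime, hPne⟩
    have hv := h v
    rw [intValuationDef_if_neg _ hs, intValuationDef_if_neg _ ha] at hv
    rw [WithZero.exp_le_exp, neg_le_neg_iff, Int.ofNat_le] at hv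
    rwa [← count_associates_factors_eq (by simpa using hs) v.isPrime v.ne_bot,
      ← count_associates_factors_eq (by simpa using ha) v.isPrime v.ne_bot]
  · simp [Multiset.count_eq_zero.mpr hP]

theorem val_algebraMap' (v : HeightOneSpectrum R) (r : R) :
    v.valuation K (algebraMap R K r) = v.intValuationDef r := by
  rw [valuation_of_algebraMap]; rfl

theorem mem_range_of_valuation_le_one {x : K}
    (h : ∀ v : HeightOneSpectrum R, v.valuation K x ≤ 1) :
    ∃ b : R, algebraMap R K b = x := by
  obtain ⟨a, s, hs, rfl⟩ := IsFractionRing.div_surjective (A := R) x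
  have hs0 : s ≠ 0 := nonZeroDivisors.ne_zero hs
  have hsF : algebraMap R K s ≠ 0 := by
    simpa using (IsFractionRing.to_map_eq_zero_iff (K := K)).not.mpr hs0
  have key : ∀ v : HeightOneSpectrum R, v.intValuationDef a ≤ v.intValuationDef s := by
    intro v
    have hx : algebraMap R K a = (algebraMap R K a / algebraMap R K s) * algebraMap R K s := by
      field_simp
    calc v.intValuationDef a = v.valuation K (algebraMap R K a) := (val_algebraMap' v a).symm
      _ = v.valuation K (algebraMap R K a / algebraMap R K s) * v.valuation K (algebraMap R K s) := by
          conv_lhs => rw [hx, map_mul]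
      _ ≤ 1 * v.valuation K (algebraMap R K s) := mul_le_mul_left (h v) _
      _ = v.intValuationDef s := by rw [one_mul, val_algebraMap']
  obtain ⟨b, rfl⟩ := dvd_of_intValuation_le hs0 key
  refine ⟨b, ?_⟩
  rw [map_mul]
  field_simp

theorem finite_not_integral (x : K) :
    {v : HeightOneSpectrum R | ¬ v.valuation K x ≤ 1}.Finite := by
  obtain ⟨a, s, hs, rfl⟩ := IsFractionRing.div_surjective (A := R) x
  have hs0 : s ≠ 0 := nonZeroDivisors.ne_zero hs
  have hspan : Ideal.span {s} ≠ (0 : Ideal R) := by simpa using hs0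
  apply (Ideal.finite_factors hspan).subset
  intro v hv
  simp only [Set.mem_setOf_eq, not_le] at hv
  by_contra hdvd
  have h1 : v.intValuationDef s = 1 := by
    rcases lt_or_eq_of_le (v.intValuation_le_one s) with h | h
    · exact absurd ((v.intValuation_lt_one_iff_dvd s).mp h) hdvd
    · exact h
  have : v.valuation K (algebraMap R K a / algebraMap R K s) ≤ 1 := by
    rw [map_div₀, val_algebraMap', val_algebraMap', h1, div_one]
    exact v.intValuation_le_one a
  exact absurd this (not_le.mpr hv)

theorem exists_N (s : R) (hs0 : s ≠ 0) (T : Finset (HeightOneSpectrum R)) :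
    ∃ N : ℕ, ∀ w ∈ T, Multiplicative.ofAdd (-(N : ℤ)) ≤ w.intValuationDef s := by
  have h : ∀ w : HeightOneSpectrum R, ∃ n : ℕ,
      Multiplicative.ofAdd (-(n : ℤ)) ≤ w.intValuationDef s := by
    intro w
    have h0 : w.intValuationDef s ≠ 0 := w.intValuation_ne_zero s hs0
    obtain ⟨m, hm⟩ : ∃ m : Multiplicative ℤ, w.intValuationDef s = (m : WithZero (Multiplicative ℤ)) :=
      Option.ne_none_iff_exists'.mp h0
    refine ⟨(Multiplicative.toAdd m).natAbs, ?_⟩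
    rw [hm, WithZero.coe_le_coe, ← Multiplicative.toAdd_le, toAdd_ofAdd]
    omega
  choose n hn using h
  refine ⟨T.sup n, fun w hw => le_trans ?_ (hn w)⟩
  rw [WithZero.coe_le_coe, Multiplicative.ofAdd_le, neg_le_neg_iff, Int.ofNat_le]
  exact Finset.le_sup hw

variable (R K) in
/-- The natural ring map from the localization at `p0` to the fraction field. -/
noncomputable def iota (p0 : Ideal R) [p0.IsPrime] : Localization.AtPrime p0 →+* K :=
  IsLocalization.map (M := p0.primeCompl) (T := nonZeroDivisors R) K (RingHom.id R)
    p0.primeCompl_le_nonZeroDivisors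

theorem iota_algebraMap (p0 : Ideal R) [p0.IsPrime] (a : R) :
    iota R K p0 (algebraMap R (Localization.AtPrime p0) a) = algebraMap R K a := by
  rw [iota]; exact IsLocalization.map_eq _ a

theorem iota_mk' (p0 : Ideal R) [p0.IsPrime] (a : R) (s : p0.primeCompl) :
    iota R K p0 (IsLocalization.mk' _ a s) =
      algebraMap R K a / algebraMap R K (s : R) := by
  have hs : algebraMap R K (s : R) ≠ 0 := by
    simpa using (IsFractionRing.to_map_eq_zero_iff (K := K)).not.mpr
      (nonZeroDivisors.ne_zero (p0.primeCompl_le_nonZeroDivisors s.2))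
  rw [eq_div_iff hs, ← iota_algebraMap (K := K) p0 (s : R), ← map_mul, IsLocalization.mk'_spec,
    iota_algebraMap]

theorem iota_injective (p0 : Ideal R) [p0.IsPrime] : Function.Injective (iota R K p0) := by
  intro x y hxy
  obtain ⟨⟨a, s⟩, rfl⟩ := IsLocalization.mk'_surjective p0.primeCompl x
  obtain ⟨⟨b, t⟩, rfl⟩ := IsLocalization.mk'_surjective p0.primeCompl y
  rw [iota_mk', iota_mk', div_eq_div_iff (by
        simpa using (IsFractionRing.to_map_eq_zero_iff (K := K)).not.mpr
          (nonZeroDivisors.ne_zero (p0.primeCompl_le_nonZeroDivisors s.2)))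
      (by
        simpa using (IsFractionRing.to_map_eq_zero_iff (K := K)).not.mpr
          (nonZeroDivisors.ne_zero (p0.primeCompl_le_nonZeroDivisors t.2))),
    ← map_mul, ← map_mul] at hxy
  have h := IsFractionRing.injective R K hxy
  rw [IsLocalization.mk'_eq_iff_eq]
  rw [mul_comm a, mul_comm b] at h
  exact congrArg _ h

variable (R K) in
/-- `iota` as an `R`-linear map. -/
noncomputable def iotaL (p0 : Ideal R) [p0.IsPrime] : Localization.AtPrime p0 →ₗ[R] K where
  toFun := iota R K p0
  map_add' := map_add _
  map_smul' r x := by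
    simp only [RingHom.id_apply, Algebra.smul_def, map_mul, iota_algebraMap]

variable (R K) in
/-- The coercion `K → K_v` as an `R`-linear map. -/
noncomputable def coeL (v : HeightOneSpectrum R) : K →ₗ[R] v.adicCompletion K :=
  (Algebra.linearMap K (v.adicCompletion K)).restrictScalars R

theorem coeL_val (v : HeightOneSpectrum R) (x : K) :
    Valued.v (coeL R K v x) = v.valuation K x :=
  v.valuedAdicCompletion_eq_valuation' x

theorem int_val_eq_one_of_not_dvd {s : R} (hs0 : s ≠ 0) (w : HeightOneSpectrum R)
    (h : ¬ w.asIdeal ∣ Ideal.span {s}) : w.intValuationDef s = 1 :=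
  ((lt_or_eq_of_le (w.intValuation_le_one s)).resolve_left
    (fun hlt => h ((w.intValuation_lt_one_iff_dvd s).mp hlt)))

/-- Key approximation step. -/
theorem approx (p0 : Ideal R) [p0.IsPrime] (hp0 : p0 = ⊥ ∨ p0.IsMaximal)
    (v : HeightOneSpectrum R) (hv : v.asIdeal ≠ p0) (k : K) :
    ∃ x : Localization.AtPrime p0,
      v.valuation K (iota R K p0 x - k) ≤ 1 ∧
      ∀ w : HeightOneSpectrum R, w ≠ v → w.valuation K (iota R K p0 x) ≤ 1 := by
  obtain ⟨a, s, hs, rfl⟩ := IsFractionRing.div_surjective (A := R) k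
  have hs0 : s ≠ 0 := nonZeroDivisors.ne_zero hs
  have hspan : Ideal.span {s} ≠ (0 : Ideal R) := by simpa using hs0
  have hsF : algebraMap R K s ≠ 0 := by
    simpa using (IsFractionRing.to_map_eq_zero_iff (K := K)).not.mpr hs0
  set T : Finset (HeightOneSpectrum R) :=
    (Ideal.finite_factors hspan).toFinset ∪ {v} with hT
  obtain ⟨N, hN⟩ := exists_N s hs0 T
  obtain ⟨c, hc⟩ := IsDedekindDomain.exists_forall_sub_mem_ideal (s := T)
    (fun w => w.asIdeal) (fun _ => N)
    (fun w _ => Ideal.prime_of_isPrime w.ne_bot w.isPrime)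
    (fun i _ j _ hij h => hij (HeightOneSpectrum.ext h))
    (fun w => if w.1 = v then 1 else 0)
  have hvT : v ∈ T := Finset.mem_union_right _ (Finset.mem_singleton_self v)
  have hc1 : c - 1 ∈ v.asIdeal ^ N := by simpa using hc v hvT
  have hcw : ∀ w ∈ T, w ≠ v → c ∈ w.asIdeal ^ N := by
    intro w hw hwv
    have := hc w hw
    simp only [if_neg hwv, sub_zero] at this
    exact this
  have hnle : ¬ v.asIdeal ^ N ≤ p0 := by
    intro hle
    have hvl : v.asIdeal ≤ p0 := Ideal.IsPrime.le_of_pow_le hle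
    rcases hp0 with rfl | hmax
    · exact v.ne_bot (le_bot_iff.mp hvl)
    · exact hv ((v.isPrime.isMaximal v.ne_bot).eq_of_le hmax.ne_top hvl)
  obtain ⟨t, htN, htp0⟩ := SetLike.not_le_iff_exists.mp hnle
  have hts : s ∣ c * t := by
    apply dvd_of_intValuation_le hs0
    intro w
    have hmul : w.intValuationDef (c * t) = w.intValuationDef c * w.intValuationDef t :=
      Valuation.map_mul w.intValuation c t
    by_cases hwv : w = v
    · subst hwv
      have ht' : w.intValuationDef t ≤ Multiplicative.ofAdd (-(N : ℤ)) :=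
        (w.intValuation_le_pow_iff_dvd t N).mpr (Ideal.dvd_span_singleton.mpr htN)
      calc w.intValuationDef (c * t) = w.intValuationDef c * w.intValuationDef t := hmul
        _ ≤ 1 * Multiplicative.ofAdd (-(N : ℤ)) :=
            mul_le_mul' (w.intValuation_le_one c) ht'
        _ = Multiplicative.ofAdd (-(N : ℤ)) := one_mul _
        _ ≤ w.intValuationDef s := hN w hvT
    · by_cases hwT : w.asIdeal ∣ Ideal.span {s}
      · have hwT' : w ∈ T := Finset.mem_union_left _ (by simpa using hwT)
        have hc' : w.intValuationDef c ≤ Multiplicative.ofAdd (-(N : ℤ)) :=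
          (w.intValuation_le_pow_iff_dvd c N).mpr
            (Ideal.dvd_span_singleton.mpr (hcw w hwT' hwv))
        calc w.intValuationDef (c * t) = w.intValuationDef c * w.intValuationDef t := hmul
          _ ≤ Multiplicative.ofAdd (-(N : ℤ)) * 1 :=
              mul_le_mul' hc' (w.intValuation_le_one t)
          _ = Multiplicative.ofAdd (-(N : ℤ)) := mul_one _
          _ ≤ w.intValuationDef s := hN w hwT'
      · rw [int_val_eq_one_of_not_dvd hs0 w hwT, hmul]
        exact mul_le_one' (w.intValuation_le_one c) (w.intValuation_le_one t)
  obtain ⟨u, huc⟩ := hts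
  have ht0 : t ≠ 0 := fun h => htp0 (h ▸ p0.zero_mem)
  have htF : algebraMap R K t ≠ 0 := by
    simpa using (IsFractionRing.to_map_eq_zero_iff (K := K)).not.mpr ht0
  have claim0 : iota R K p0
      (IsLocalization.mk' (Localization.AtPrime p0) (a * u) (⟨t, htp0⟩ : p0.primeCompl)) =
      algebraMap R K (a * c) / algebraMap R K s := by
    rw [iota_mk', div_eq_div_iff htF hsF, ← map_mul, ← map_mul]
    congr 1
    calc a * u * s = a * (s * u) := by ring
      _ = a * (c * t) := by rw [huc]
      _ = a * c * t := by ring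
  have hval : ∀ (w : HeightOneSpectrum R) (b : R),
      w.intValuationDef b ≤ w.intValuationDef s →
      w.valuation K (algebraMap R K b / algebraMap R K s) ≤ 1 := by
    intro w b hb
    rw [map_div₀, val_algebraMap', val_algebraMap',
      div_le_one₀ (b := w.intValuationDef s) (lt_of_le_of_ne (zero_le') (Ne.symm (w.intValuation_ne_zero s hs0)))]
    exact hb
  refine ⟨IsLocalization.mk' (Localization.AtPrime p0) (a * u) (⟨t, htp0⟩ : p0.primeCompl),
    ?_, ?_⟩
  · rw [claim0, div_sub_div_same, ← map_sub, show a * c - a = a * (c - 1) by ring]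
    apply hval
    calc v.intValuationDef (a * (c - 1))
        = v.intValuationDef a * v.intValuationDef (c - 1) :=
          Valuation.map_mul v.intValuation a (c - 1)
      _ ≤ 1 * Multiplicative.ofAdd (-(N : ℤ)) := mul_le_mul' (v.intValuation_le_one a)
          ((v.intValuation_le_pow_iff_dvd (c - 1) N).mpr (Ideal.dvd_span_singleton.mpr hc1))
      _ = Multiplicative.ofAdd (-(N : ℤ)) := one_mul _
      _ ≤ v.intValuationDef s := hN v hvT
  · intro w hwv
    rw [claim0]
    apply hval
    have hmul : w.intValuationDef (a * c) = w.intValuationDef a * w.intValuationDef c :=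
      Valuation.map_mul w.intValuation a c
    by_cases hwT : w.asIdeal ∣ Ideal.span {s}
    · have hwT' : w ∈ T := Finset.mem_union_left _ (by simpa using hwT)
      calc w.intValuationDef (a * c) = w.intValuationDef a * w.intValuationDef c := hmul
        _ ≤ 1 * Multiplicative.ofAdd (-(N : ℤ)) := mul_le_mul' (w.intValuation_le_one a)
            ((w.intValuation_le_pow_iff_dvd c N).mpr
              (Ideal.dvd_span_singleton.mpr (hcw w hwT' hwv)))
        _ = Multiplicative.ofAdd (-(N : ℤ)) := one_mul _
        _ ≤ w.intValuationDef s := hN w hwT'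
    · rw [int_val_eq_one_of_not_dvd hs0 w hwT, hmul]
      exact mul_le_one' (w.intValuation_le_one a) (w.intValuation_le_one c)

end Statement4Aux

open Statement4Aux

theorem mem_integersSubmodule (v : HeightOneSpectrum A) (x : v.adicCompletion F) :
    x ∈ integersSubmodule A F v ↔ Valued.v x ≤ 1 := Iff.rfl

section Main

open scoped Classical

variable (p0 : Ideal A) [p0.IsPrime]

/-- Component maps `L → F_v/A_v`. -/
noncomputable def lamMap (v : HeightOneSpectrum A) :
    Localization.AtPrime p0 →ₗ[A] (v.adicCompletion F ⧸ integersSubmodule A F v) :=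
  (integersSubmodule A F v).mkQ ∘ₗ coeL A F v ∘ₗ iotaL A F p0

abbrev SubHOS := {v : HeightOneSpectrum A // v.asIdeal ≠ p0}

noncomputable def suppSet (x : Localization.AtPrime p0) : Finset (SubHOS A p0) :=
  Set.Finite.toFinset (s := {w : SubHOS A p0 | ¬ w.1.valuation F (iotaL A F p0 x) ≤ 1})
    ((finite_not_integral (iotaL A F p0 x)).preimage (Subtype.val_injective.injOn))

noncomputable def Phi0 (x : Localization.AtPrime p0) :
    ⨁ v : SubHOS A p0, (v.1.adicCompletion F ⧸ integersSubmodule A F v.1) :=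
  DirectSum.mk (fun v : SubHOS A p0 => (v.1.adicCompletion F ⧸ integersSubmodule A F v.1))
    (suppSet A F p0 x) (fun w => lamMap A F p0 w.1.1 x)

theorem Phi0_apply (x : Localization.AtPrime p0) (w : SubHOS A p0) :
    Phi0 A F p0 x w = lamMap A F p0 w.1 x := by
  unfold Phi0
  by_cases hw : w ∈ suppSet A F p0 x
  · exact DirectSum.mk_apply_of_mem hw
  · rw [DirectSum.mk_apply_of_notMem hw]
    have : w.1.valuation F (iotaL A F p0 x) ≤ 1 := by
      by_contra h
      exact hw (by simpa [suppSet] using h)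
    symm
    rw [lamMap, LinearMap.comp_apply, LinearMap.comp_apply, Submodule.mkQ_apply,
      Submodule.Quotient.mk_eq_zero]
    rw [mem_integersSubmodule, coeL_val]
    exact this

noncomputable def Phi : Localization.AtPrime p0 →ₗ[A]
    ⨁ v : SubHOS A p0, (v.1.adicCompletion F ⧸ integersSubmodule A F v.1) where
  toFun := Phi0 A F p0
  map_add' x y := by
    refine DFinsupp.ext fun w => ?_
    rw [DirectSum.add_apply, Phi0_apply, Phi0_apply, Phi0_apply, map_add]
  map_smul' r x := by
    refine DFinsupp.ext fun w => ?_
    rw [RingHom.id_apply, DirectSum.smul_apply, Phi0_apply, Phi0_apply, map_smul]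

end Main

open scoped Multiplicative in
set_option maxHeartbeats 1000000 in
/-- Let `A` be a Dedekind domain which is not a field, with field of
fractions `F`, and let `p0` be a prime ideal of `A` which is either the zero ideal or a
maximal ideal.  Then there is an isomorphism of `A`-modules
`A_{(p0)}/A ≅ ⨁_p F_p/A_p`, the direct sum being over all maximal ideals `p ≠ p0` of
`A`.  (Since `A` is a Dedekind domain and not a field, the maximal ideals of `A` are
precisely its height-one primes, i.e. the elements of `HeightOneSpectrum A`.) -/
theorem statement4 (hA : ¬IsField A) (p0 : Ideal A) [p0.IsPrime]
    (hp0 : p0 = ⊥ ∨ p0.IsMaximal) :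
    Nonempty
      ((Localization.AtPrime p0 ⧸
          LinearMap.range (Algebra.linearMap A (Localization.AtPrime p0))) ≃ₗ[A]
        ⨁ v : {v : HeightOneSpectrum A // v.asIdeal ≠ p0},
          (v.1.adicCompletion F ⧸ integersSubmodule A F v.1)) := by
  classical
  set L := Localization.AtPrime p0
  -- the range of A in L is contained in the kernel of Phi
  have hker : LinearMap.range (Algebra.linearMap A L) ≤ LinearMap.ker (Phi A F p0) := by
    rintro _ ⟨a, rfl⟩
    rw [LinearMap.mem_ker]
    refine DFinsupp.ext fun w => ?_
    rw [show Phi A F p0 (Algebra.linearMap A L a) = Phi0 A F p0 (Algebra.linearMap A L a) from rfl,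
      Phi0_apply, DirectSum.zero_apply]
    rw [lamMap, LinearMap.comp_apply, LinearMap.comp_apply, Submodule.mkQ_apply,
      Submodule.Quotient.mk_eq_zero, mem_integersSubmodule, coeL_val]
    show w.1.valuation F (iota A F p0 (algebraMap A L a)) ≤ 1
    rw [iota_algebraMap, val_algebraMap']
    exact w.1.intValuation_le_one a
  have hker' : LinearMap.ker (Phi A F p0) ≤ LinearMap.range (Algebra.linearMap A L) := by
    intro x hx
    rw [LinearMap.mem_ker] at hx
    have hall : ∀ u : HeightOneSpectrum A, u.valuation F (iota A F p0 x) ≤ 1 := by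
      intro u
      by_cases hu : u.asIdeal ≠ p0
      · have h0 := congrFun (congrArg DFunLike.coe hx) ⟨u, hu⟩
        rw [show (Phi A F p0 x) = Phi0 A F p0 x from rfl, Phi0_apply, DirectSum.zero_apply] at h0
        rw [lamMap, LinearMap.comp_apply, LinearMap.comp_apply, Submodule.mkQ_apply,
          Submodule.Quotient.mk_eq_zero, mem_integersSubmodule, coeL_val] at h0
        exact h0
      · push_neg at hu
        obtain ⟨⟨a, s⟩, rfl⟩ := IsLocalization.mk'_surjective p0.primeCompl x
        rw [iota_mk', map_div₀, val_algebraMap', val_algebraMap']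
        have hs1 : u.intValuationDef (s : A) = 1 := by
          apply int_val_eq_one_of_not_dvd
          · exact nonZeroDivisors.ne_zero (p0.primeCompl_le_nonZeroDivisors s.2)
          · rw [Ideal.dvd_span_singleton, hu]
            exact s.2
        rw [hs1, div_one]
        exact u.intValuation_le_one a
    obtain ⟨b, hb⟩ := mem_range_of_valuation_le_one (R := A) (K := F) (x := iota A F p0 x) hall
    refine ⟨b, ?_⟩
    apply iota_injective (K := F) p0
    rw [← hb]
    exact (iota_algebraMap (K := F) p0 b)
  have hsurj : Function.Surjective (Phi A F p0) := by
    intro y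
    induction y using DirectSum.induction_on with
    | zero => exact ⟨0, map_zero _⟩
    | of w q =>
      obtain ⟨y0, rfl⟩ := Submodule.Quotient.mk_surjective _ q
      -- density : find k : F close to y0
      obtain ⟨z, hz, k, rfl⟩ :
          ∃ z, z ∈ {z : w.1.adicCompletion F | Valued.v (z - y0) < 1} ∧
            ∃ k : F, (coeL A F w.1 k) = z := by
        letI : Valued F (WithZero (Multiplicative ℤ)) := w.1.adicValued
        have hd : DenseRange (algebraMap F (w.1.adicCompletion F)) :=
          HeightOneSpectrum.denseRange_algebraMap (K := F) (v := w.1)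
        have hnh : {z : w.1.adicCompletion F | Valued.v (z - y0) < 1} ∈ nhds y0 := by
          refine Valued.mem_nhds.mpr ⟨1, fun z hz => ?_⟩
          simpa using hz
        obtain ⟨z, hz1, k, hk⟩ := mem_closure_iff_nhds.mp (hd y0) _ hnh
        exact ⟨z, hz1, k, hk⟩
      obtain ⟨x, hx1, hx2⟩ := approx p0 hp0 w.1 w.2 k
      refine ⟨x, ?_⟩
      refine DFinsupp.ext fun w' => ?_
      rw [show (Phi A F p0 x) = Phi0 A F p0 x from rfl, Phi0_apply]
      by_cases hww : w' = w
      · subst hww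
        rw [DirectSum.of_eq_same]
        rw [lamMap, LinearMap.comp_apply, LinearMap.comp_apply, Submodule.mkQ_apply]
        rw [Submodule.Quotient.eq]
        rw [mem_integersSubmodule]
        have hsplit : coeL A F w'.1 (iotaL A F p0 x) - y0 =
            coeL A F w'.1 (iota A F p0 x - k) + (coeL A F w'.1 k - y0) := by
          rw [map_sub]
          show coeL A F w'.1 (iota A F p0 x) - y0 = _
          ring
        rw [hsplit]
        refine le_trans (Valued.v.map_add _ _) (max_le ?_ ?_)
        · rw [coeL_val]; exact hx1
        · exact le_of_lt hz
      · rw [DirectSum.of_eq_of_ne _ _ _ hww]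
        rw [lamMap, LinearMap.comp_apply, LinearMap.comp_apply, Submodule.mkQ_apply,
          Submodule.Quotient.mk_eq_zero, mem_integersSubmodule, coeL_val]
        exact hx2 w'.1 (fun h => hww (Subtype.ext h))
    | add y1 y2 h1 h2 =>
      obtain ⟨x1, rfl⟩ := h1
      obtain ⟨x2, rfl⟩ := h2
      exact ⟨x1 + x2, map_add _ _ _⟩
  refine ⟨LinearEquiv.ofBijective
    (Submodule.liftQ (M₂ := ⨁ v : SubHOS A p0, (v.1.adicCompletion F ⧸ integersSubmodule A F v.1))
      (LinearMap.range (Algebra.linearMap A L)) (Phi A F p0) (by exact hker)) ⟨?_, ?_⟩⟩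
  · refine (LinearMap.ker_eq_bot (f := Submodule.liftQ
      (M₂ := ⨁ v : SubHOS A p0, (v.1.adicCompletion F ⧸ integersSubmodule A F v.1))
      (LinearMap.range (Algebra.linearMap A L)) (Phi A F p0) (by exact hker))).mp ?_
    exact Submodule.ker_liftQ_eq_bot _ _ _ hker'
  · intro y
    obtain ⟨x, hx⟩ := hsurj y
    exact ⟨Submodule.Quotient.mk x, hx⟩
end

section
/- Let A be a Dedekind domain which is not a field, with field of fractions F, and let p0 be a prime ideal of A which is either the zero ideal or a maximal ideal. Then there is an isomorphism of rings End_A(A_{(p0)}/A) ≅ ∏_p A_p, where the product is extended over all maximal ideals p ≠ p0 of A. -/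
set_option linter.unusedSectionVars false

open IsDedekindDomain IsDedekindDomain.HeightOneSpectrum
open scoped Multiplicative
set_option maxHeartbeats 1000000
set_option synthInstance.maxHeartbeats 1000000

namespace Statement5

variable {A : Type*} [CommRing A] [IsDedekindDomain A] (p0 : Ideal A) [p0.IsPrime]

local notation "L" => Localization.AtPrime p0

/-- The module `A_{(p0)}/A`. -/
abbrev M := Localization.AtPrime p0 ⧸
    LinearMap.range (Algebra.linearMap A (Localization.AtPrime p0))

noncomputable def mkM : Localization.AtPrime p0 →ₗ[A] M p0 := Submodule.mkQ _

lemma injA : Function.Injective (algebraMap A (Localization.AtPrime p0)) :=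
  IsLocalization.injective _ p0.primeCompl_le_nonZeroDivisors

/-- `1/s`. -/
noncomputable def els (s : p0.primeCompl) : Localization.AtPrime p0 :=
  IsLocalization.mk' _ 1 s

/-- `a ↦ [a/s]`. -/
noncomputable def psi (s : p0.primeCompl) : A →ₗ[A] M p0 where
  toFun a := mkM p0 (IsLocalization.mk' _ a s)
  map_add' a b := by
    show mkM p0 (IsLocalization.mk' _ (a + b) s) = _
    rw [← map_add, ← IsLocalization.mk'_add a b s s,
      show a * (s : A) + b * (s : A) = (a + b) * (s : A) by ring, IsLocalization.mk'_cancel]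
  map_smul' r a := by
    show mkM p0 (IsLocalization.mk' _ (r • a) s) = _
    rw [RingHom.id_apply, ← map_smul]
    congr 1
    rw [IsLocalization.smul_mk', smul_eq_mul]

lemma psi_apply (s : p0.primeCompl) (a : A) :
    psi p0 s a = mkM p0 (IsLocalization.mk' _ a s) := rfl

lemma mk'_smul_els (s : p0.primeCompl) (a : A) :
    a • els p0 s = IsLocalization.mk' _ a s := by
  rw [els, IsLocalization.smul_mk', mul_one]

lemma psi_eq_zero_iff (s : p0.primeCompl) (a : A) :
    psi p0 s a = 0 ↔ (s : A) ∣ a := by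
  rw [psi_apply, mkM, Submodule.mkQ_apply, Submodule.Quotient.mk_eq_zero]
  constructor
  · rintro ⟨b, hb⟩
    simp only [Algebra.linearMap_apply] at hb
    rw [IsLocalization.eq_mk'_iff_mul_eq, ← map_mul] at hb
    exact ⟨b, by rw [← injA p0 hb, mul_comm]⟩
  · rintro ⟨b, rfl⟩
    refine ⟨b, ?_⟩
    simp only [Algebra.linearMap_apply]
    rw [IsLocalization.eq_mk'_iff_mul_eq, ← map_mul, mul_comm]

/-- torsion: if `s • m = 0` then `m = [a/s]` for some `a`. -/
lemma exists_of_smul_eq_zero (s : p0.primeCompl) (m : M p0) (h : (s : A) • m = 0) :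
    ∃ a : A, m = psi p0 s a := by
  obtain ⟨l, rfl⟩ := Submodule.Quotient.mk_surjective _ m
  obtain ⟨a, t, rfl⟩ := IsLocalization.exists_mk'_eq p0.primeCompl l
  have h' : (Submodule.Quotient.mk ((s:A) • IsLocalization.mk' (Localization.AtPrime p0) a t) :
      M p0) = 0 := by
    rw [Submodule.Quotient.mk_smul]; exact h
  rw [Submodule.Quotient.mk_eq_zero] at h'
  obtain ⟨b, hb⟩ := h'
  simp only [Algebra.linearMap_apply] at hb
  rw [IsLocalization.smul_mk', IsLocalization.eq_mk'_iff_mul_eq, ← map_mul] at hb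
  have hab : b * (t : A) = (s : A) * a := injA p0 hb
  refine ⟨b, ?_⟩
  have heq : IsLocalization.mk' (Localization.AtPrime p0) a t = IsLocalization.mk' _ b s := by
    rw [IsLocalization.mk'_eq_iff_eq]
    congr 1
    rw [← hab, mul_comm]
  rw [psi_apply, mkM, Submodule.mkQ_apply]
  exact congrArg _ heq

/-- quotient map between levels. -/
noncomputable def qmap (s t : p0.primeCompl) :
    A ⧸ Ideal.span {((s * t : p0.primeCompl) : A)} →+* A ⧸ Ideal.span {(s : A)} :=
  Ideal.Quotient.factor
    (Ideal.span_singleton_le_span_singleton.mpr ⟨(t : A), rfl⟩)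

lemma qmap_mk (s t : p0.primeCompl) (a : A) :
    qmap p0 s t (Ideal.Quotient.mk _ a) = Ideal.Quotient.mk _ a :=
  Ideal.Quotient.factor_mk _ _

/-- The ring of compatible families. -/
noncomputable def CompatFam : Subring (Π s : p0.primeCompl, A ⧸ Ideal.span {(s : A)}) where
  carrier := {c | ∀ s t, qmap p0 s t (c (s * t)) = c s}
  mul_mem' hc hd := by intro s t; rw [Pi.mul_apply, Pi.mul_apply, map_mul, hc, hd]
  one_mem' := by intro s t; rw [Pi.one_apply, Pi.one_apply, map_one]
  add_mem' hc hd := by intro s t; rw [Pi.add_apply, Pi.add_apply, map_add, hc, hd]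
  zero_mem' := by intro s t; rw [Pi.zero_apply, Pi.zero_apply, map_zero]
  neg_mem' hc := by intro s t; rw [Pi.neg_apply, Pi.neg_apply, map_neg, hc]

noncomputable def psibar (s : p0.primeCompl) :
    (A ⧸ Ideal.span {(s : A)}) →ₗ[A] M p0 :=
  Submodule.liftQ _ (psi p0 s) (by
    intro x hx
    rw [Ideal.mem_span_singleton] at hx
    exact (psi_eq_zero_iff p0 s x).mpr hx)

lemma psibar_mk (s : p0.primeCompl) (a : A) :
    psibar p0 s (Ideal.Quotient.mk _ a) = psi p0 s a := rfl

lemma psibar_injective (s : p0.primeCompl) : Function.Injective (psibar p0 s) := by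
  rw [← LinearMap.ker_eq_bot]; refine Submodule.ker_liftQ_eq_bot _ _ _ ?_
  intro x hx
  rw [LinearMap.mem_ker, psi_eq_zero_iff] at hx
  rw [Ideal.mem_span_singleton]
  exact hx

/-- The key compatibility: `[c_s / s] = t • [c_{st}/(st)]`. -/
lemma mem_compatFam_iff (c : Π s : p0.primeCompl, A ⧸ Ideal.span {(s : A)}) :
    c ∈ CompatFam p0 ↔ ∀ s t, qmap p0 s t (c (s * t)) = c s := Iff.rfl

lemma key_cancel (c : CompatFam p0) (s t : p0.primeCompl) :
    psibar p0 s (c.1 s) = (t : A) • psibar p0 (s * t) (c.1 (s * t)) := by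
  obtain ⟨x, hx⟩ := Ideal.Quotient.mk_surjective (c.1 (s * t))
  have hcs : c.1 s = Ideal.Quotient.mk _ x := by
    rw [← ((mem_compatFam_iff p0 c.1).mp c.2) s t, ← hx, qmap_mk]
  rw [hcs, ← hx, psibar_mk, psibar_mk, ← map_smul]
  rw [psi_apply, psi_apply]
  congr 1
  rw [smul_eq_mul, mul_comm ((t : A)) x]
  exact (IsLocalization.mk'_cancel x s t).symm

lemma psi_cancel (s t : p0.primeCompl) (x : A) :
    psi p0 s x = (t : A) • psi p0 (s * t) x := by
  rw [← map_smul, psi_apply, psi_apply]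
  congr 1
  rw [smul_eq_mul, mul_comm ((t : A)) x]
  exact (IsLocalization.mk'_cancel x s t).symm

lemma psi_eq_smul (s : p0.primeCompl) (a : A) :
    psi p0 s a = a • mkM p0 (els p0 s) := by
  rw [psi_apply, ← mk'_smul_els, map_smul]

lemma smul_mkM_els (s : p0.primeCompl) : (s : A) • mkM p0 (els p0 s) = 0 := by
  rw [← psi_eq_smul]
  exact (psi_eq_zero_iff p0 s s).mpr dvd_rfl

lemma els_eq (s t : p0.primeCompl) : els p0 s = (t : A) • els p0 (s * t) := by
  rw [mk'_smul_els, els, ← IsLocalization.mk'_cancel 1 s t, one_mul]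

noncomputable def alphaFun (f : Module.End A (M p0)) (s : p0.primeCompl) :
    A ⧸ Ideal.span {(s : A)} :=
  Ideal.Quotient.mk _ (exists_of_smul_eq_zero p0 s (f (mkM p0 (els p0 s)))
    (by rw [← map_smul, smul_mkM_els, map_zero])).choose

lemma alphaFun_spec (f : Module.End A (M p0)) (s : p0.primeCompl) :
    psibar p0 s (alphaFun p0 f s) = f (mkM p0 (els p0 s)) := by
  rw [alphaFun, psibar_mk]
  exact (exists_of_smul_eq_zero p0 s (f (mkM p0 (els p0 s)))
    (by rw [← map_smul, smul_mkM_els, map_zero])).choose_spec.symm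

lemma alphaFun_unique (f : Module.End A (M p0)) (s : p0.primeCompl)
    (q : A ⧸ Ideal.span {(s : A)}) (h : psibar p0 s q = f (mkM p0 (els p0 s))) :
    q = alphaFun p0 f s :=
  psibar_injective p0 s (h.trans (alphaFun_spec p0 f s).symm)

noncomputable def alphaHom : Module.End A (M p0) →+* CompatFam p0 where
  toFun f := ⟨fun s => alphaFun p0 f s, by
    intro s t
    obtain ⟨x, hx⟩ := Ideal.Quotient.mk_surjective (alphaFun p0 f (s * t))
    show qmap p0 s t (alphaFun p0 f (s * t)) = alphaFun p0 f s
    rw [← hx, qmap_mk]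
    refine alphaFun_unique p0 f s _ ?_
    rw [psibar_mk, psi_cancel p0 s t x, ← psibar_mk, hx, alphaFun_spec,
      ← map_smul, ← map_smul, ← els_eq]⟩
  map_one' := by
    apply Subtype.ext; funext s
    refine (alphaFun_unique p0 1 s 1 ?_).symm
    rw [show (1 : A ⧸ Ideal.span {(s : A)}) = Ideal.Quotient.mk _ 1 from (map_one _).symm,
      psibar_mk]
    rfl
  map_mul' f g := by
    apply Subtype.ext; funext s
    obtain ⟨a, ha⟩ := Ideal.Quotient.mk_surjective (alphaFun p0 f s)
    obtain ⟨b, hb⟩ := Ideal.Quotient.mk_surjective (alphaFun p0 g s)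
    show alphaFun p0 (f * g) s = alphaFun p0 f s * alphaFun p0 g s
    refine (alphaFun_unique p0 (f * g) s _ ?_).symm
    rw [← ha, ← hb, ← map_mul, psibar_mk]
    show psi p0 s (a * b) = f (g (mkM p0 (els p0 s)))
    rw [← alphaFun_spec p0 g s, ← hb, psibar_mk, psi_eq_smul p0 s b, map_smul,
      ← alphaFun_spec p0 f s, ← ha, psibar_mk, ← map_smul, smul_eq_mul, mul_comm b a]
  map_zero' := by
    apply Subtype.ext; funext s
    refine (alphaFun_unique p0 0 s 0 ?_).symm
    rw [map_zero]
    rfl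
  map_add' f g := by
    apply Subtype.ext; funext s
    show alphaFun p0 (f + g) s = alphaFun p0 f s + alphaFun p0 g s
    refine (alphaFun_unique p0 (f + g) s _ ?_).symm
    rw [map_add, alphaFun_spec, alphaFun_spec]
    rfl

lemma alphaHom_injective : Function.Injective (alphaHom p0) := by
  intro f g h
  have h' : ∀ s, alphaFun p0 f s = alphaFun p0 g s := fun s =>
    congrFun (congrArg Subtype.val h) s
  apply LinearMap.ext
  intro m
  obtain ⟨l, rfl⟩ := Submodule.Quotient.mk_surjective _ m
  obtain ⟨a, s, rfl⟩ := IsLocalization.exists_mk'_eq p0.primeCompl l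
  have hrep : (Submodule.Quotient.mk (IsLocalization.mk' _ a s) : M p0) = psi p0 s a := rfl
  rw [hrep, psi_eq_smul, map_smul, map_smul, ← alphaFun_spec p0 f s,
    ← alphaFun_spec p0 g s, h' s]

noncomputable def Ffun (c : CompatFam p0) : Localization.AtPrime p0 → M p0 :=
  fun l => (IsLocalization.sec p0.primeCompl l).1 •
    psibar p0 (IsLocalization.sec p0.primeCompl l).2
      (c.1 (IsLocalization.sec p0.primeCompl l).2)

lemma Ffun_eq (c : CompatFam p0) (a : A) (s : p0.primeCompl)
    (l : Localization.AtPrime p0) (h : l = IsLocalization.mk' _ a s) :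
    Ffun p0 c l = a • psibar p0 s (c.1 s) := by
  set a₁ := (IsLocalization.sec p0.primeCompl l).1 with ha₁
  set s₁ := (IsLocalization.sec p0.primeCompl l).2 with hs₁
  have h₁ : l = IsLocalization.mk' (Localization.AtPrime p0) a₁ s₁ :=
    (IsLocalization.mk'_sec _ l).symm
  have hcross : a₁ * (s : A) = a * (s₁ : A) := by
    have heq := h₁.symm.trans h
    rw [IsLocalization.mk'_eq_iff_eq] at heq
    have heq2 := injA p0 heq
    rw [mul_comm ((s : A)) a₁, mul_comm ((s₁ : A)) a] at heq2
    exact heq2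
  show a₁ • psibar p0 s₁ (c.1 s₁) = a • psibar p0 s (c.1 s)
  rw [key_cancel p0 c s₁ s, key_cancel p0 c s s₁, smul_smul, smul_smul,
    congrArg (fun u => psibar p0 u (c.1 u)) (mul_comm s₁ s), hcross]

noncomputable def FfunLin (c : CompatFam p0) : Localization.AtPrime p0 →ₗ[A] M p0 where
  toFun := Ffun p0 c
  map_add' l₁ l₂ := by
    obtain ⟨a, s, rfl⟩ := IsLocalization.exists_mk'_eq p0.primeCompl l₁
    obtain ⟨b, t, rfl⟩ := IsLocalization.exists_mk'_eq p0.primeCompl l₂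
    have hsum : IsLocalization.mk' (Localization.AtPrime p0) a s + IsLocalization.mk' _ b t =
        IsLocalization.mk' _ (a * (t : A) + b * (s : A)) (s * t) :=
      (IsLocalization.mk'_add a b s t).symm
    rw [Ffun_eq p0 c _ _ _ hsum, Ffun_eq p0 c a s _ rfl, Ffun_eq p0 c b t _ rfl, add_smul]
    congr 1
    · rw [key_cancel p0 c s t, smul_smul]
    · rw [key_cancel p0 c t s, smul_smul,
        congrArg (fun u => psibar p0 u (c.1 u)) (mul_comm t s)]
  map_smul' r l := by
    obtain ⟨a, s, rfl⟩ := IsLocalization.exists_mk'_eq p0.primeCompl l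
    show Ffun p0 c (r • IsLocalization.mk' _ a s) = r • Ffun p0 c (IsLocalization.mk' _ a s)
    rw [Ffun_eq p0 c (r * a) s (r • IsLocalization.mk' _ a s) (IsLocalization.smul_mk' r a s),
      Ffun_eq p0 c a s _ rfl, smul_smul]

lemma Ffun_algebraMap (c : CompatFam p0) (a : A) :
    Ffun p0 c (algebraMap A (Localization.AtPrime p0) a) = 0 := by
  rw [Ffun_eq p0 c a 1 _ (IsLocalization.mk'_one (Localization.AtPrime p0) a).symm]
  obtain ⟨x, hx⟩ := Ideal.Quotient.mk_surjective (c.1 1)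
  rw [← hx, psibar_mk,
    (psi_eq_zero_iff p0 1 x).mpr (by rw [OneMemClass.coe_one]; exact one_dvd x), smul_zero]

noncomputable def alphaInvEnd (c : CompatFam p0) : Module.End A (M p0) :=
  Submodule.liftQ _ (FfunLin p0 c) (by
    rintro l ⟨a, rfl⟩
    simp only [LinearMap.mem_ker, Algebra.linearMap_apply]
    exact Ffun_algebraMap p0 c a)

lemma alphaHom_surjective : Function.Surjective (alphaHom p0) := by
  intro c
  refine ⟨alphaInvEnd p0 c, ?_⟩
  apply Subtype.ext; funext s
  show alphaFun p0 (alphaInvEnd p0 c) s = c.1 s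
  refine (alphaFun_unique p0 _ s (c.1 s) ?_).symm
  have hval : alphaInvEnd p0 c (mkM p0 (els p0 s)) = Ffun p0 c (els p0 s) := rfl
  rw [hval, Ffun_eq p0 c 1 s _ (by rw [els]), one_smul]

/-- **Part A**: the endomorphism ring of `A_{(p0)}/A` is the ring of compatible families. -/
noncomputable def endRingEquiv : Module.End A (M p0) ≃+* CompatFam p0 :=
  RingEquiv.ofBijective (alphaHom p0) ⟨alphaHom_injective p0, alphaHom_surjective p0⟩


variable {A : Type*} [CommRing A] [IsDedekindDomain A]

lemma intVal_def (v : HeightOneSpectrum A) (r : A) :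
    v.intValuation r = v.intValuationDef r := rfl

lemma intValuation_le_of_dvd {r s : A} (h : s ∣ r) (v : HeightOneSpectrum A) :
    v.intValuation r ≤ v.intValuation s := by
  obtain ⟨u, rfl⟩ := h
  rw [Valuation.map_mul]
  calc v.intValuation s * v.intValuation u ≤ v.intValuation s * 1 :=
        mul_le_mul_right (v.intValuation_le_one u) _
    _ = v.intValuation s := mul_one _

lemma exists_intValuation_eq (v : HeightOneSpectrum A) {s : A} (hs : s ≠ 0) :
    ∃ n : ℕ, v.intValuation s = ↑(Multiplicative.ofAdd (-(n : ℤ))) := by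
  have h0 : v.intValuation s ≠ 0 := v.intValuation_ne_zero s hs
  obtain ⟨g, hg⟩ := WithZero.ne_zero_iff_exists.mp h0
  have h1 : v.intValuation s ≤ 1 := v.intValuation_le_one s
  rw [← hg] at h1 ⊢
  rw [show (1 : WithZero (Multiplicative ℤ)) = ↑(Multiplicative.ofAdd (0 : ℤ)) from rfl,
    WithZero.coe_le_coe, ← ofAdd_toAdd g, Multiplicative.ofAdd_le] at h1
  refine ⟨(-(Multiplicative.toAdd g)).toNat, ?_⟩
  rw [WithZero.coe_inj]
  apply Multiplicative.toAdd.injective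
  rw [toAdd_ofAdd]
  omega

lemma dvd_of_forall_intValuation_le {r s : A} (hs : s ≠ 0)
    (h : ∀ v : HeightOneSpectrum A, v.intValuation r ≤ v.intValuation s) : s ∣ r := by
  classical
  have hJ : Ideal.span {s} ≠ 0 := by
    simp only [Ne, Ideal.zero_eq_bot, Ideal.span_singleton_eq_bot]; exact hs
  have hprod : (∏ P ∈ (UniqueFactorizationMonoid.factors (Ideal.span {s})).toFinset,
      P ^ (UniqueFactorizationMonoid.factors (Ideal.span {s})).count P) = Ideal.span {s} := by
    have hmc := Finset.prod_multiset_map_count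
      (UniqueFactorizationMonoid.factors (Ideal.span {s})) id
    simp only [id_eq] at hmc
    rw [← hmc, Multiset.map_id']
    exact associated_iff_eq.mp (UniqueFactorizationMonoid.factors_prod hJ)
  refine Ideal.span_singleton_le_span_singleton.mp (Ideal.le_of_dvd ?_)
  rw [← hprod]
  apply Finset.prod_dvd_of_coprime
  · intro P hP Q hQ hPQ
    simp only [Function.onFun]
    have hPp := UniqueFactorizationMonoid.prime_of_factor P
      (Multiset.mem_toFinset.mp hP)
    have hQp := UniqueFactorizationMonoid.prime_of_factor Q
      (Multiset.mem_toFinset.mp hQ)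
    have hPm : P.IsMaximal := Ring.DimensionLEOne.maximalOfPrime hPp.ne_zero
      (Ideal.isPrime_of_prime hPp)
    have hQm : Q.IsMaximal := Ring.DimensionLEOne.maximalOfPrime hQp.ne_zero
      (Ideal.isPrime_of_prime hQp)
    exact ((Ideal.isCoprime_iff_sup_eq.mpr (hPm.coprime_of_ne hQm hPQ)).pow (R := Ideal A))
  · intro P hP
    have hPp := UniqueFactorizationMonoid.prime_of_factor P (Multiset.mem_toFinset.mp hP)
    set v : HeightOneSpectrum A :=
      ⟨P, Ideal.isPrime_of_prime hPp, hPp.ne_zero⟩ with hv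
    set n := (UniqueFactorizationMonoid.factors (Ideal.span {s})).count P with hn
    have hdvds : v.asIdeal ^ n ∣ Ideal.span {s} := by
      rw [← hprod]
      exact Finset.dvd_prod_of_mem _ hP
    have h1 : v.intValuation s ≤ ↑(Multiplicative.ofAdd (-(n : ℤ))) := by
      exact (v.intValuation_le_pow_iff_dvd s n).mpr hdvds
    have h2 : v.intValuation r ≤ ↑(Multiplicative.ofAdd (-(n : ℤ))) := le_trans (h v) h1
    exact (v.intValuation_le_pow_iff_dvd r n).mp h2

lemma intValuation_le_pow_of_mem (v : HeightOneSpectrum A) {x : A} {n : ℕ}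
    (h : x ∈ v.asIdeal ^ n) :
    v.intValuation x ≤ ↑(Multiplicative.ofAdd (-(n : ℤ))) := by
  refine (v.intValuation_le_pow_iff_dvd x n).mpr ?_
  rw [Ideal.dvd_iff_le]
  exact (Ideal.span_singleton_le_iff_mem _).mpr h

lemma intValuation_eq_one_of_not_dvd (v : HeightOneSpectrum A) {s : A}
    (h : ¬ v.asIdeal ∣ Ideal.span {s}) : v.intValuation s = 1 := by
  have h1 := v.intValuation_le_one s
  rcases lt_or_eq_of_le h1 with h2 | h2
  · exact absurd ((v.intValuation_lt_one_iff_dvd s).mp h2) h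
  · exact h2

lemma intValuation_eq_one_of_not_mem (v : HeightOneSpectrum A) {s : A}
    (h : s ∉ v.asIdeal) : v.intValuation s = 1 := by
  apply intValuation_eq_one_of_not_dvd
  intro hcon
  exact h ((Ideal.span_singleton_le_iff_mem _).mp (Ideal.le_of_dvd hcon))

lemma ofAdd_neg_le_one (n : ℕ) :
    (↑(Multiplicative.ofAdd (-(n : ℤ))) : WithZero (Multiplicative ℤ)) ≤ 1 := by
  rw [show (1 : WithZero (Multiplicative ℤ)) = ↑(Multiplicative.ofAdd (0 : ℤ)) from rfl, WithZero.coe_le_coe,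
    Multiplicative.ofAdd_le]
  omega

/-- a valuation `v ξ` which is `≤ ofAdd(-n)` for all `n` forces `ξ = 0`. -/
lemma eq_zero_of_forall_le {K : Type*} [Field K] [Valued K (WithZero (Multiplicative ℤ))] {ξ : K}
    (h : ∀ n : ℕ, Valued.v ξ ≤ ↑(Multiplicative.ofAdd (-(n : ℤ)))) : ξ = 0 := by
  by_contra hne
  have hv : Valued.v ξ ≠ 0 := (Valuation.ne_zero_iff _).mpr hne
  obtain ⟨g, hg⟩ := WithZero.ne_zero_iff_exists.mp hv
  set n : ℕ := (Multiplicative.toAdd g).natAbs + 1 with hn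
  have := h n
  rw [← hg, WithZero.coe_le_coe, ← ofAdd_toAdd g,
    Multiplicative.ofAdd_le] at this
  omega

lemma exists_unit_lt (γ : (WithZero (Multiplicative ℤ))ˣ) :
    ∃ n : ℕ, (↑(Multiplicative.ofAdd (-(n : ℤ))) : WithZero (Multiplicative ℤ)) < ↑γ := by
  obtain ⟨g, hg⟩ := WithZero.ne_zero_iff_exists.mp γ.ne_zero
  refine ⟨(Multiplicative.toAdd g).natAbs + 1, ?_⟩
  rw [← hg, WithZero.coe_lt_coe, ← ofAdd_toAdd g, Multiplicative.ofAdd_lt]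
  simp only [toAdd_ofAdd]
  omega

/-- limits preserve closed valuation balls. -/
lemma valued_le_of_tendsto {K : Type*} [Field K] [Valued K (WithZero (Multiplicative ℤ))] {u : ℕ → K} {ξ z : K}
    {γ : WithZero (Multiplicative ℤ)} (hu : Filter.Tendsto u Filter.atTop (nhds ξ))
    (h : ∀ᶠ n in Filter.atTop, Valued.v (u n - z) ≤ γ) : Valued.v (ξ - z) ≤ γ := by
  by_contra hlt
  push_neg at hlt
  have hne : Valued.v (ξ - z) ≠ 0 := ne_of_gt (lt_of_le_of_lt zero_le' hlt)
  obtain ⟨n, hn1, hn2⟩ :=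
    (h.and ((hu.sub_const z).eventually (Valued.locally_const hne))).exists
  have : Valued.v (u n - z) = Valued.v (ξ - z) := hn2
  rw [this] at hn1
  exact absurd hn1 (not_le.mpr hlt)

section WithF

variable {A : Type*} [CommRing A] [IsDedekindDomain A]
variable (F : Type*) [Field F] [Algebra A F] [IsFractionRing A F]

lemma valuation_algebraMap_eq (v : HeightOneSpectrum A) (a : A) :
    v.valuation F (algebraMap A F a) = v.intValuation a :=
  valuation_of_algebraMap v a

/-- clear denominators away from `v`. -/
lemma exists_rep (v : HeightOneSpectrum A) {k : F} (hk : v.valuation F k ≤ 1) :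
    ∃ a e : A, e ∉ v.asIdeal ∧ (algebraMap A F e) * k = algebraMap A F a := by
  classical
  obtain ⟨a₀, d₀, hd⟩ := IsLocalization.exists_mk'_eq (nonZeroDivisors A) k
  have hd0 : (d₀ : A) ≠ 0 := nonZeroDivisors.coe_ne_zero d₀
  have hval : v.intValuation a₀ ≤ v.intValuation (d₀ : A) := by
    rw [← hd, valuation_of_mk'] at hk
    have hpos : (0 : WithZero (Multiplicative ℤ)) < v.intValuation (d₀ : A) :=
      zero_lt_iff.mpr (v.intValuation_ne_zero _ hd0)
    rw [div_le_one₀ hpos] at hk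
    exact hk
  -- the finite set of primes dividing d₀, away from v
  have hIne : Ideal.span {(d₀ : A)} ≠ 0 := by
    simp only [Ne, Ideal.zero_eq_bot, Ideal.span_singleton_eq_bot]; exact hd0
  set T0 : Finset (HeightOneSpectrum A) := (Ideal.finite_factors hIne).toFinset with hT0
  set T : Finset (HeightOneSpectrum A) := insert v T0 with hT
  -- exponents
  obtain ⟨nn, hnn⟩ : ∃ nn : HeightOneSpectrum A → ℕ, ∀ w : HeightOneSpectrum A,
      w.intValuation (d₀ : A) = ↑(Multiplicative.ofAdd (-(nn w : ℤ))) := by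
    refine ⟨fun w => (exists_intValuation_eq w hd0).choose, fun w =>
      (exists_intValuation_eq w hd0).choose_spec⟩
  obtain ⟨y, hy⟩ := IsDedekindDomain.exists_forall_sub_mem_ideal
    (s := T) (fun w => w.asIdeal) (fun w => if w = v then 1 else nn w)
    (fun w _ => Ideal.prime_of_isPrime w.ne_bot w.isPrime)
    (fun w _ w' _ hww' h => hww' (HeightOneSpectrum.ext h))
    (fun w => if (w : HeightOneSpectrum A) = v then 1 else 0)
  have hyv : y ∉ v.asIdeal := by
    have hmem : y - 1 ∈ v.asIdeal := by
      simpa using hy v (Finset.mem_insert_self v T0)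
    intro hyv
    have h1 : (1 : A) ∈ v.asIdeal := by
      have := v.asIdeal.sub_mem hyv hmem
      simpa using this
    exact v.isPrime.ne_top (v.asIdeal.eq_top_of_isUnit_mem h1 isUnit_one)
  have hdvd : (d₀ : A) ∣ y * a₀ := by
    apply dvd_of_forall_intValuation_le hd0
    intro w
    rw [Valuation.map_mul]
    by_cases hwv : w = v
    · subst hwv
      calc w.intValuation y * w.intValuation a₀ ≤ 1 * w.intValuation a₀ :=
            mul_le_mul_left (w.intValuation_le_one y) _
        _ = w.intValuation a₀ := one_mul _
        _ ≤ w.intValuation (d₀ : A) := hval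
    · by_cases hwT : w ∈ T0
      · have hmem := hy w (Finset.mem_insert_of_mem hwT)
        simp only [if_neg hwv] at hmem
        rw [sub_zero] at hmem
        have h1 : w.intValuation y ≤ ↑(Multiplicative.ofAdd (-(nn w : ℤ))) :=
          intValuation_le_pow_of_mem w hmem
        rw [← hnn w] at h1
        calc w.intValuation y * w.intValuation a₀ ≤ w.intValuation (d₀ : A) * 1 :=
              mul_le_mul' h1 (w.intValuation_le_one a₀)
          _ = w.intValuation (d₀ : A) := mul_one _
      · have : w.intValuation (d₀ : A) = 1 := by
          apply intValuation_eq_one_of_not_dvd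
          intro hcon
          exact hwT (by rw [hT0, Set.Finite.mem_toFinset]; exact hcon)
        rw [this]
        exact mul_le_one' (w.intValuation_le_one y) (w.intValuation_le_one a₀)
  obtain ⟨c, hc⟩ := hdvd
  refine ⟨c, y, hyv, ?_⟩
  -- (algebraMap y) * k = algebraMap c
  have hk' : algebraMap A F y * k = IsLocalization.mk' F (y * a₀) d₀ := by
    rw [← hd, IsLocalization.mul_mk'_eq_mk'_of_mul]
  rw [hk', hc]
  rw [show (d₀ : A) * c = c * (d₀ : A) from mul_comm _ _]
  have hcan : algebraMap A F c = IsLocalization.mk' F (c * (d₀ : A)) d₀ := by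
    rw [IsLocalization.eq_mk'_iff_mul_eq, ← map_mul]
  exact hcan.symm

lemma isMaximal_of_heightOne (v : HeightOneSpectrum A) : v.asIdeal.IsMaximal :=
  Ring.DimensionLEOne.maximalOfPrime v.ne_bot v.isPrime

/-- approximate an element of `F` which is `v`-integral by an element of `A`, `v`-adically. -/
lemma exists_approx_int (v : HeightOneSpectrum A) {k : F} (hk : v.valuation F k ≤ 1) (n : ℕ) :
    ∃ b : A, v.valuation F (k - algebraMap A F b) ≤ ↑(Multiplicative.ofAdd (-(n : ℤ))) := by
  obtain ⟨a, e, he, hea⟩ := exists_rep F v hk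
  have he0 : e ≠ 0 := fun h => he (h ▸ v.asIdeal.zero_mem)
  -- span{e} and v.asIdeal^n are coprime
  have hcop : IsCoprime (Ideal.span {e}) v.asIdeal := by
    rw [Ideal.isCoprime_iff_sup_eq]
    obtain ⟨y, i, hi, hyi⟩ := (isMaximal_of_heightOne v).exists_inv he
    rw [Ideal.eq_top_iff_one]
    refine Submodule.mem_sup.mpr ⟨y * e, ?_, i, hi, hyi⟩
    exact Ideal.mem_span_singleton'.mpr ⟨y, rfl⟩
  have hcopn : Ideal.span {e} ⊔ v.asIdeal ^ n = ⊤ :=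
    Ideal.isCoprime_iff_sup_eq.mp (hcop.pow_right)
  obtain ⟨u, hu, m, hm, hum⟩ := Submodule.mem_sup.mp
    (by rw [hcopn]; exact Submodule.mem_top : (1 : A) ∈ Ideal.span {e} ⊔ v.asIdeal ^ n)
  obtain ⟨t, ht⟩ := Ideal.mem_span_singleton'.mp hu
  refine ⟨t * a, ?_⟩
  -- (k - ta) * e = a * (1 - t*e)
  have h1te : (1 : A) - t * e ∈ v.asIdeal ^ n := by
    have : (1 : A) - t * e = m := by rw [← hum, ← ht]; ring
    rw [this]; exact hm
  have heq : (k - algebraMap A F (t * a)) * algebraMap A F e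
      = algebraMap A F (a * (1 - t * e)) := by
    simp only [map_mul, map_sub, map_one]
    linear_combination hea
  have hve : v.valuation F (algebraMap A F e) = 1 := by
    rw [valuation_algebraMap_eq]
    exact intValuation_eq_one_of_not_mem v he
  have := congrArg (v.valuation F) heq
  rw [Valuation.map_mul, hve, mul_one, valuation_algebraMap_eq, Valuation.map_mul] at this
  rw [this]
  calc v.intValuation a * v.intValuation (1 - t * e)
      ≤ 1 * ↑(Multiplicative.ofAdd (-(n : ℤ))) :=
        mul_le_mul' (v.intValuation_le_one a) (intValuation_le_pow_of_mem v h1te)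
    _ = ↑(Multiplicative.ofAdd (-(n : ℤ))) := one_mul _

end WithF

section Completion

variable {A : Type*} [CommRing A] [IsDedekindDomain A]
variable (F : Type*) [Field F] [Algebra A F] [IsFractionRing A F]

lemma valued_algebraMap_F (v : HeightOneSpectrum A) (k : F) :
    Valued.v (algebraMap F (v.adicCompletion F) k) = v.valuation F k := by
  have h : (algebraMap F (v.adicCompletion F)) k = (k : v.adicCompletion F) := rfl
  rw [h]
  exact v.valuedAdicCompletion_eq_valuation' k

lemma valued_sub_trans {K : Type*} [Field K] [Valued K (WithZero (Multiplicative ℤ))]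
    (a b c : K) :
    Valued.v (a - c) ≤ max (Valued.v (a - b)) (Valued.v (b - c)) := by
  rw [← sub_add_sub_cancel a b c]
  exact Valuation.map_add _ _ _

lemma exists_close (v : HeightOneSpectrum A) {x : v.adicCompletion F}
    (hx : Valued.v x ≤ 1) (n : ℕ) :
    ∃ k : F, Valued.v (x - algebraMap F (v.adicCompletion F) k) ≤
        ↑(Multiplicative.ofAdd (-(n : ℤ))) ∧ v.valuation F k ≤ 1 := by
  set γ : (WithZero (Multiplicative ℤ))ˣ :=
    Units.mk0 (↑(Multiplicative.ofAdd (-(n : ℤ)))) WithZero.coe_ne_zero with hγ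
  have hball : {y : v.adicCompletion F | Valued.v (y - x) < ↑γ} ∈ nhds x := by
    obtain ⟨π, hπ, hπ0⟩ := Submodule.exists_mem_ne_zero_of_ne_bot v.ne_bot
    set a := algebraMap F (v.adicCompletion F) (algebraMap A F (π ^ n)) with ha
    have hva : Valued.v a = v.intValuation (π ^ n) := by
      rw [ha, valued_algebraMap_F, valuation_algebraMap_eq]
    have hle : Valued.v a ≤ ↑γ := by
      rw [hva]; exact intValuation_le_pow_of_mem v (Ideal.pow_mem_pow hπ n)
    have hne : Valued.v.restrict a ≠ 0 := by
      rw [Ne, Valuation.restrict_eq_zero_iff, hva]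
      exact v.intValuation_ne_zero _ (pow_ne_zero _ hπ0)
    rw [Valued.mem_nhds]
    refine ⟨Units.mk0 _ hne, fun y hy => ?_⟩
    simp only [Set.mem_setOf_eq, Units.val_mk0, Valuation.restrict_lt_iff] at hy
    exact lt_of_lt_of_le hy hle
  obtain ⟨k, hk⟩ :=
    (HeightOneSpectrum.denseRange_algebraMap (K := F) (v := v)).mem_nhds hball
  have h1 : Valued.v ((algebraMap F (v.adicCompletion F) k) - x) <
      ↑(Multiplicative.ofAdd (-(n : ℤ))) := hk
  refine ⟨k, ?_, ?_⟩
  · rw [Valuation.map_sub_swap]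
    exact le_of_lt h1
  · have h2 : Valued.v (algebraMap F (v.adicCompletion F) k) ≤ 1 := by
      have hdec : algebraMap F (v.adicCompletion F) k =
          x + ((algebraMap F (v.adicCompletion F) k) - x) := by ring
      rw [hdec]
      refine le_trans (Valuation.map_add _ _ _) (max_le hx ?_)
      exact le_trans (le_of_lt h1) (ofAdd_neg_le_one n)
    rwa [valued_algebraMap_F] at h2

lemma exists_approx_completion (v : HeightOneSpectrum A) {x : v.adicCompletion F}
    (hx : Valued.v x ≤ 1) (n : ℕ) :
    ∃ b : A, Valued.v (x - algebraMap F (v.adicCompletion F) (algebraMap A F b)) ≤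
        ↑(Multiplicative.ofAdd (-(n : ℤ))) := by
  obtain ⟨k, hk1, hk2⟩ := exists_close F v hx n
  obtain ⟨b, hb⟩ := exists_approx_int F v hk2 n
  refine ⟨b, ?_⟩
  refine le_trans (valued_sub_trans _ (algebraMap F (v.adicCompletion F) k) _) (max_le hk1 ?_)
  rw [← RingHom.map_sub, valued_algebraMap_F]
  exact hb

end Completion

section Approx

variable {A : Type*} [CommRing A] [IsDedekindDomain A]
variable (F : Type*) [Field F] [Algebra A F] [IsFractionRing A F]
variable (p0 : Ideal A) [p0.IsPrime]

lemma coe_primeCompl_ne_zero (s : p0.primeCompl) : (s : A) ≠ 0 := by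
  intro h
  exact s.2 (by rw [h]; exact p0.zero_mem)

lemma prime_ne_p0_of_dvd (s : p0.primeCompl) {v : HeightOneSpectrum A}
    (h : v.asIdeal ∣ Ideal.span {(s : A)}) : v.asIdeal ≠ p0 := by
  intro he
  have hmem : (s : A) ∈ v.asIdeal :=
    (Ideal.span_singleton_le_iff_mem _).mp (Ideal.le_of_dvd h)
  rw [he] at hmem
  exact s.2 hmem

/-- `b : A` approximates the adele `x` to precision `s`. -/
def IsApprox (x : Π v : {v : HeightOneSpectrum A // v.asIdeal ≠ p0},
      (v.1.adicCompletionIntegers F)) (s : p0.primeCompl) (b : A) : Prop :=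
  ∀ v : {v : HeightOneSpectrum A // v.asIdeal ≠ p0},
    Valued.v ((x v : v.1.adicCompletion F) -
      algebraMap F (v.1.adicCompletion F) (algebraMap A F b)) ≤ v.1.intValuation (s : A)

lemma exists_isApprox (x : Π v : {v : HeightOneSpectrum A // v.asIdeal ≠ p0},
      (v.1.adicCompletionIntegers F)) (s : p0.primeCompl) :
    ∃ b : A, IsApprox F p0 x s b := by
  classical
  have hs0 : (s : A) ≠ 0 := coe_primeCompl_ne_zero p0 s
  have hIne : Ideal.span {(s : A)} ≠ 0 := by
    simp only [Ne, Ideal.zero_eq_bot, Ideal.span_singleton_eq_bot]; exact hs0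
  set T : Finset (HeightOneSpectrum A) := (Ideal.finite_factors hIne).toFinset with hT
  have hTn : ∀ w ∈ T, w.asIdeal ≠ p0 := fun w hw =>
    prime_ne_p0_of_dvd p0 s (by rwa [hT, Set.Finite.mem_toFinset] at hw)
  obtain ⟨nn, hnn⟩ : ∃ nn : HeightOneSpectrum A → ℕ, ∀ w : HeightOneSpectrum A,
      w.intValuation (s : A) = ↑(Multiplicative.ofAdd (-(nn w : ℤ))) :=
    ⟨fun w => (exists_intValuation_eq w hs0).choose, fun w =>
      (exists_intValuation_eq w hs0).choose_spec⟩
  have hstep : ∀ w : HeightOneSpectrum A, w ∈ T → ∃ b : A, ∀ (hw : w.asIdeal ≠ p0),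
      Valued.v ((x ⟨w, hw⟩ : w.adicCompletion F) -
        algebraMap F (w.adicCompletion F) (algebraMap A F b)) ≤
        ↑(Multiplicative.ofAdd (-(nn w : ℤ))) := by
    intro w hwT
    have hw := hTn w hwT
    have hxw : Valued.v ((x ⟨w, hw⟩ : w.adicCompletion F)) ≤ 1 := (x ⟨w, hw⟩).2
    obtain ⟨b, hb⟩ := exists_approx_completion F w hxw (nn w)
    exact ⟨b, fun _ => hb⟩
  obtain ⟨y, hy⟩ := IsDedekindDomain.exists_forall_sub_mem_ideal
    (s := T) (fun w => w.asIdeal) nn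
    (fun w _ => Ideal.prime_of_isPrime w.ne_bot w.isPrime)
    (fun w _ w' _ hww' h => hww' (HeightOneSpectrum.ext h))
    (fun w => (hstep w.1 w.2).choose)
  refine ⟨y, fun v => ?_⟩
  by_cases hvT : v.1 ∈ T
  · set b : A := (hstep v.1 hvT).choose with hb
    have hxb := (hstep v.1 hvT).choose_spec v.2
    have hby : Valued.v (algebraMap F (v.1.adicCompletion F) (algebraMap A F b) -
        algebraMap F (v.1.adicCompletion F) (algebraMap A F y)) ≤
        ↑(Multiplicative.ofAdd (-(nn v.1 : ℤ))) := by
      rw [← RingHom.map_sub, ← RingHom.map_sub, valued_algebraMap_F, valuation_algebraMap_eq]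
      have hmem := hy v.1 hvT
      have : b - y = -(y - b) := by ring
      rw [this, Valuation.map_neg]
      exact intValuation_le_pow_of_mem v.1 hmem
    rw [hnn v.1]
    refine le_trans (valued_sub_trans _
      (algebraMap F (v.1.adicCompletion F) (algebraMap A F b)) _) (max_le ?_ hby)
    exact hxb
  · have h1 : v.1.intValuation (s : A) = 1 := by
      apply intValuation_eq_one_of_not_dvd
      intro hcon
      exact hvT (by rw [hT, Set.Finite.mem_toFinset]; exact hcon)
    rw [h1]
    refine le_trans (Valuation.map_sub _ _ _) (max_le (x v).2 ?_)
    rw [valued_algebraMap_F, valuation_algebraMap_eq]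
    exact v.1.intValuation_le_one y

end Approx

section Beta

variable {A : Type*} [CommRing A] [IsDedekindDomain A]
variable (F : Type*) [Field F] [Algebra A F] [IsFractionRing A F]
variable (p0 : Ideal A) [p0.IsPrime]

lemma ofAdd_neg_mono {i N : ℕ} (h : N ≤ i) :
    (↑(Multiplicative.ofAdd (-(i : ℤ))) : WithZero (Multiplicative ℤ)) ≤
      ↑(Multiplicative.ofAdd (-(N : ℤ))) := by
  rw [WithZero.coe_le_coe, Multiplicative.ofAdd_le]
  omega

lemma isApprox_sub_dvd {x : Π v : {v : HeightOneSpectrum A // v.asIdeal ≠ p0},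
      (v.1.adicCompletionIntegers F)} {s : p0.primeCompl} {b b' : A}
    (hb : IsApprox F p0 x s b) (hb' : IsApprox F p0 x s b') : (s : A) ∣ (b - b') := by
  apply dvd_of_forall_intValuation_le (coe_primeCompl_ne_zero p0 s)
  intro v
  by_cases hv : v.asIdeal = p0
  · have h1 : v.intValuation (s : A) = 1 :=
      intValuation_eq_one_of_not_mem v (by rw [hv]; exact s.2)
    rw [h1]; exact v.intValuation_le_one _
  · have h2 : Valued.v (algebraMap F (v.adicCompletion F) (algebraMap A F b) -
        algebraMap F (v.adicCompletion F) (algebraMap A F b')) ≤ v.intValuation (s : A) := by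
      refine le_trans (valued_sub_trans _ ((x ⟨v, hv⟩ : v.adicCompletion F)) _)
        (max_le ?_ (hb' ⟨v, hv⟩))
      rw [Valuation.map_sub_swap]
      exact hb ⟨v, hv⟩
    rwa [← RingHom.map_sub, ← RingHom.map_sub, valued_algebraMap_F,
      valuation_algebraMap_eq] at h2

lemma isApprox_mul_right {x : Π v : {v : HeightOneSpectrum A // v.asIdeal ≠ p0},
      (v.1.adicCompletionIntegers F)} {s t : p0.primeCompl} {b : A}
    (h : IsApprox F p0 x (s * t) b) : IsApprox F p0 x s b := by
  intro v
  refine le_trans (h v) ?_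
  exact intValuation_le_of_dvd ⟨(t : A), rfl⟩ v.1

lemma isApprox_one (s : p0.primeCompl) :
    IsApprox F p0 (1 : Π v : {v : HeightOneSpectrum A // v.asIdeal ≠ p0},
      (v.1.adicCompletionIntegers F)) s 1 := by
  intro v
  have hco : ((1 : Π v : {v : HeightOneSpectrum A // v.asIdeal ≠ p0},
      (v.1.adicCompletionIntegers F)) v : v.1.adicCompletion F) = 1 := rfl
  rw [hco, map_one, map_one, sub_self, Valuation.map_zero]
  exact zero_le'

lemma isApprox_mul {x y : Π v : {v : HeightOneSpectrum A // v.asIdeal ≠ p0},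
      (v.1.adicCompletionIntegers F)} {s : p0.primeCompl} {bx by' : A}
    (hx : IsApprox F p0 x s bx) (hy : IsApprox F p0 y s by') :
    IsApprox F p0 (x * y) s (bx * by') := by
  intro v
  have hco : ((x * y) v : v.1.adicCompletion F) =
      (x v : v.1.adicCompletion F) * (y v : v.1.adicCompletion F) := rfl
  have hmap : algebraMap F (v.1.adicCompletion F) (algebraMap A F (bx * by')) =
      algebraMap F (v.1.adicCompletion F) (algebraMap A F bx) *
        algebraMap F (v.1.adicCompletion F) (algebraMap A F by') := by
    rw [RingHom.map_mul, RingHom.map_mul]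
  rw [hco, hmap]
  have hdec : (x v : v.1.adicCompletion F) * (y v : v.1.adicCompletion F) -
      algebraMap F (v.1.adicCompletion F) (algebraMap A F bx) *
        algebraMap F (v.1.adicCompletion F) (algebraMap A F by') =
      (x v : v.1.adicCompletion F) * ((y v : v.1.adicCompletion F) -
        algebraMap F (v.1.adicCompletion F) (algebraMap A F by')) +
      ((x v : v.1.adicCompletion F) -
        algebraMap F (v.1.adicCompletion F) (algebraMap A F bx)) *
        algebraMap F (v.1.adicCompletion F) (algebraMap A F by') := by ring
  rw [hdec]
  refine le_trans (Valuation.map_add _ _ _) (max_le ?_ ?_)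
  · rw [Valuation.map_mul]
    calc Valued.v ((x v : v.1.adicCompletion F)) * _ ≤ 1 * v.1.intValuation (s : A) :=
          mul_le_mul' (x v).2 (hy v)
      _ = v.1.intValuation (s : A) := one_mul _
  · rw [Valuation.map_mul]
    have hb1 : Valued.v (algebraMap F (v.1.adicCompletion F) (algebraMap A F by')) ≤ 1 := by
      rw [valued_algebraMap_F, valuation_algebraMap_eq]
      exact v.1.intValuation_le_one by'
    calc Valued.v _ * Valued.v (algebraMap F (v.1.adicCompletion F) (algebraMap A F by'))
        ≤ v.1.intValuation (s : A) * 1 := mul_le_mul' (hx v) hb1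
      _ = v.1.intValuation (s : A) := mul_one _

lemma isApprox_add {x y : Π v : {v : HeightOneSpectrum A // v.asIdeal ≠ p0},
      (v.1.adicCompletionIntegers F)} {s : p0.primeCompl} {bx by' : A}
    (hx : IsApprox F p0 x s bx) (hy : IsApprox F p0 y s by') :
    IsApprox F p0 (x + y) s (bx + by') := by
  intro v
  have hco : ((x + y) v : v.1.adicCompletion F) =
      (x v : v.1.adicCompletion F) + (y v : v.1.adicCompletion F) := rfl
  have hmap : algebraMap F (v.1.adicCompletion F) (algebraMap A F (bx + by')) =
      algebraMap F (v.1.adicCompletion F) (algebraMap A F bx) +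
        algebraMap F (v.1.adicCompletion F) (algebraMap A F by') := by
    rw [RingHom.map_add, RingHom.map_add]
  rw [hco, hmap]
  have hdec : (x v : v.1.adicCompletion F) + (y v : v.1.adicCompletion F) -
      (algebraMap F (v.1.adicCompletion F) (algebraMap A F bx) +
        algebraMap F (v.1.adicCompletion F) (algebraMap A F by')) =
      ((x v : v.1.adicCompletion F) -
        algebraMap F (v.1.adicCompletion F) (algebraMap A F bx)) +
      ((y v : v.1.adicCompletion F) -
        algebraMap F (v.1.adicCompletion F) (algebraMap A F by')) := by ring
  rw [hdec]
  exact le_trans (Valuation.map_add _ _ _) (max_le (hx v) (hy v))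

lemma isApprox_zero (s : p0.primeCompl) :
    IsApprox F p0 (0 : Π v : {v : HeightOneSpectrum A // v.asIdeal ≠ p0},
      (v.1.adicCompletionIntegers F)) s 0 := by
  intro v
  have hco : ((0 : Π v : {v : HeightOneSpectrum A // v.asIdeal ≠ p0},
      (v.1.adicCompletionIntegers F)) v : v.1.adicCompletion F) = 0 := rfl
  rw [hco, map_zero, map_zero, sub_zero, Valuation.map_zero]
  exact zero_le'

end Beta

section BetaHom

variable {A : Type*} [CommRing A] [IsDedekindDomain A]
variable (F : Type*) [Field F] [Algebra A F] [IsFractionRing A F]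
variable (p0 : Ideal A) [p0.IsPrime]

noncomputable def betaHom :
    (Π v : {v : HeightOneSpectrum A // v.asIdeal ≠ p0}, (v.1.adicCompletionIntegers F)) →+*
      CompatFam p0 where
  toFun x := ⟨fun s => Ideal.Quotient.mk _ ((exists_isApprox F p0 x s).choose), by
    intro s t
    show qmap p0 s t (Ideal.Quotient.mk _ ((exists_isApprox F p0 x (s * t)).choose)) = _
    rw [qmap_mk, Ideal.Quotient.eq, Ideal.mem_span_singleton]
    exact isApprox_sub_dvd F p0
      (isApprox_mul_right F p0 (exists_isApprox F p0 x (s * t)).choose_spec)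
      (exists_isApprox F p0 x s).choose_spec⟩
  map_one' := by
    apply Subtype.ext; funext s
    show Ideal.Quotient.mk _ ((exists_isApprox F p0 1 s).choose) = 1
    rw [show (1 : A ⧸ Ideal.span {(s : A)}) = Ideal.Quotient.mk _ 1 from (map_one _).symm,
      Ideal.Quotient.eq, Ideal.mem_span_singleton]
    exact isApprox_sub_dvd F p0 (exists_isApprox F p0 1 s).choose_spec (isApprox_one F p0 s)
  map_mul' x y := by
    apply Subtype.ext; funext s
    show Ideal.Quotient.mk _ ((exists_isApprox F p0 (x * y) s).choose) =
      Ideal.Quotient.mk _ ((exists_isApprox F p0 x s).choose) *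
        Ideal.Quotient.mk _ ((exists_isApprox F p0 y s).choose)
    rw [← map_mul, Ideal.Quotient.eq, Ideal.mem_span_singleton]
    exact isApprox_sub_dvd F p0 (exists_isApprox F p0 (x * y) s).choose_spec
      (isApprox_mul F p0 (exists_isApprox F p0 x s).choose_spec
        (exists_isApprox F p0 y s).choose_spec)
  map_zero' := by
    apply Subtype.ext; funext s
    show Ideal.Quotient.mk _ ((exists_isApprox F p0 0 s).choose) = 0
    rw [show (0 : A ⧸ Ideal.span {(s : A)}) = Ideal.Quotient.mk _ 0 from (map_zero _).symm,
      Ideal.Quotient.eq, Ideal.mem_span_singleton]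
    exact isApprox_sub_dvd F p0 (exists_isApprox F p0 0 s).choose_spec (isApprox_zero F p0 s)
  map_add' x y := by
    apply Subtype.ext; funext s
    show Ideal.Quotient.mk _ ((exists_isApprox F p0 (x + y) s).choose) =
      Ideal.Quotient.mk _ ((exists_isApprox F p0 x s).choose) +
        Ideal.Quotient.mk _ ((exists_isApprox F p0 y s).choose)
    rw [← map_add, Ideal.Quotient.eq, Ideal.mem_span_singleton]
    exact isApprox_sub_dvd F p0 (exists_isApprox F p0 (x + y) s).choose_spec
      (isApprox_add F p0 (exists_isApprox F p0 x s).choose_spec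
        (exists_isApprox F p0 y s).choose_spec)

lemma exists_pi (hp0 : p0 = ⊥ ∨ p0.IsMaximal) (v : HeightOneSpectrum A)
    (hv : v.asIdeal ≠ p0) : ∃ π : A, π ∈ p0.primeCompl ∧ π ∈ v.asIdeal := by
  rcases hp0 with h | h
  · obtain ⟨π, hπ, hne⟩ := Submodule.exists_mem_ne_zero_of_ne_bot v.ne_bot
    refine ⟨π, ?_, hπ⟩
    intro hmem
    rw [h] at hmem
    exact hne (Ideal.mem_bot.mp hmem)
  · have hle : ¬ v.asIdeal ≤ p0 := fun hle =>
      hv ((isMaximal_of_heightOne v).eq_of_le h.ne_top hle)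
    obtain ⟨π, hπv, hπp⟩ := SetLike.not_le_iff_exists.mp hle
    exact ⟨π, hπp, hπv⟩

lemma betaHom_injective (hp0 : p0 = ⊥ ∨ p0.IsMaximal) :
    Function.Injective (betaHom F p0) := by
  intro x y hxy
  have hcoord : ∀ s : p0.primeCompl,
      (s : A) ∣ ((exists_isApprox F p0 x s).choose - (exists_isApprox F p0 y s).choose) := by
    intro s
    have h : Ideal.Quotient.mk (Ideal.span {(s : A)}) ((exists_isApprox F p0 x s).choose) =
        Ideal.Quotient.mk (Ideal.span {(s : A)}) ((exists_isApprox F p0 y s).choose) :=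
      congrFun (congrArg Subtype.val hxy) s
    rwa [Ideal.Quotient.eq, Ideal.mem_span_singleton] at h
  funext v
  apply Subtype.ext
  have hzero : ((x v : v.1.adicCompletion F) - (y v : v.1.adicCompletion F)) = 0 := by
    apply eq_zero_of_forall_le
    intro n
    obtain ⟨π, hπ1, hπ2⟩ := exists_pi p0 hp0 v.1 v.2
    set sπ : p0.primeCompl := ⟨π, hπ1⟩ with hsπ
    set s : p0.primeCompl := sπ ^ n with hs
    have hcoe : ((s : p0.primeCompl) : A) = π ^ n := SubmonoidClass.coe_pow _ _
    have hπn : v.1.intValuation ((s : A)) ≤ ↑(Multiplicative.ofAdd (-(n : ℤ))) := by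
      rw [hcoe]; exact intValuation_le_pow_of_mem v.1 (Ideal.pow_mem_pow hπ2 n)
    have h1 := (exists_isApprox F p0 x s).choose_spec v
    have h2 := (exists_isApprox F p0 y s).choose_spec v
    have h3 : Valued.v (algebraMap F (v.1.adicCompletion F)
        (algebraMap A F ((exists_isApprox F p0 x s).choose)) -
        algebraMap F (v.1.adicCompletion F)
        (algebraMap A F ((exists_isApprox F p0 y s).choose))) ≤ v.1.intValuation (s : A) := by
      rw [← RingHom.map_sub, ← RingHom.map_sub, valued_algebraMap_F, valuation_algebraMap_eq]
      exact intValuation_le_of_dvd (hcoord s) v.1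
    refine le_trans (valued_sub_trans _ (algebraMap F (v.1.adicCompletion F)
      (algebraMap A F ((exists_isApprox F p0 x s).choose))) _)
      (max_le ?_ ?_)
    · exact le_trans (h1) hπn
    refine le_trans (valued_sub_trans _ (algebraMap F (v.1.adicCompletion F)
      (algebraMap A F ((exists_isApprox F p0 y s).choose))) _)
      (max_le (le_trans h3 hπn) ?_)
    rw [Valuation.map_sub_swap]
    exact le_trans h2 hπn
  exact sub_eq_zero.mp hzero

lemma compat_dvd (c : CompatFam p0) (s t : p0.primeCompl) {w₁ w₂ : A}
    (h₁ : Ideal.Quotient.mk (Ideal.span {((s * t : p0.primeCompl) : A)}) w₁ = c.1 (s * t))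
    (h₂ : Ideal.Quotient.mk (Ideal.span {(s : A)}) w₂ = c.1 s) :
    (s : A) ∣ (w₁ - w₂) := by
  have hc := (mem_compatFam_iff p0 c.1).mp c.2 s t
  rw [← h₁, qmap_mk, ← h₂] at hc
  rw [← Ideal.mem_span_singleton]
  exact Ideal.Quotient.eq.mp hc

lemma betaHom_surjective (hp0 : p0 = ⊥ ∨ p0.IsMaximal) :
    Function.Surjective (betaHom F p0) := by
  intro c
  have hxv : ∀ v : {v : HeightOneSpectrum A // v.asIdeal ≠ p0},
      ∃ ξ : v.1.adicCompletion F, Valued.v ξ ≤ 1 ∧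
        ∀ (s : p0.primeCompl) (w : A),
          Ideal.Quotient.mk (Ideal.span {(s : A)}) w = c.1 s →
          Valued.v (ξ - algebraMap F (v.1.adicCompletion F) (algebraMap A F w)) ≤
            v.1.intValuation (s : A) := by
    intro v
    obtain ⟨π, hπ1, hπ2⟩ := exists_pi p0 hp0 v.1 v.2
    set sπ : p0.primeCompl := ⟨π, hπ1⟩ with hsπ
    have hbn : ∀ n : ℕ, ∃ b : A,
        Ideal.Quotient.mk (Ideal.span {((sπ ^ n : p0.primeCompl) : A)}) b = c.1 (sπ ^ n) :=
      fun n => Ideal.Quotient.mk_surjective _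
    set b : ℕ → A := fun n => (hbn n).choose with hb
    have hbspec : ∀ n, Ideal.Quotient.mk (Ideal.span {((sπ ^ n : p0.primeCompl) : A)}) (b n)
        = c.1 (sπ ^ n) := fun n => (hbn n).choose_spec
    have hdiff : ∀ m n : ℕ, m ≤ n → (π ^ m : A) ∣ (b n - b m) := by
      intro m n hmn
      have hsplit : sπ ^ n = sπ ^ m * sπ ^ (n - m) := by
        rw [← pow_add]; congr 1; omega
      have h₁ := hbspec n
      rw [hsplit] at h₁
      have hdvd := compat_dvd p0 c (sπ ^ m) (sπ ^ (n - m)) h₁ (hbspec m)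
      rwa [SubmonoidClass.coe_pow] at hdvd
    set u : ℕ → v.1.adicCompletion F :=
      fun n => algebraMap F (v.1.adicCompletion F) (algebraMap A F (b n)) with hu
    have hud : ∀ m n : ℕ, m ≤ n →
        Valued.v (u n - u m) ≤ ↑(Multiplicative.ofAdd (-(m : ℤ))) := by
      intro m n hmn
      show Valued.v (algebraMap F (v.1.adicCompletion F) (algebraMap A F (b n)) -
        algebraMap F (v.1.adicCompletion F) (algebraMap A F (b m))) ≤ _
      rw [← RingHom.map_sub, ← RingHom.map_sub, valued_algebraMap_F, valuation_algebraMap_eq]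
      refine le_trans (intValuation_le_of_dvd (hdiff m n hmn) v.1) ?_
      exact intValuation_le_pow_of_mem v.1 (Ideal.pow_mem_pow hπ2 m)
    have hcauchy : CauchySeq u := by
      show Cauchy (Filter.map u Filter.atTop)
      rw [Valued.cauchy_iff]
      refine ⟨Filter.map_neBot, ?_⟩
      intro γ
      obtain ⟨N, hN⟩ := exists_unit_lt
        (Units.mk0 (MonoidWithZeroHom.ValueGroup₀.embedding γ.1) ((map_ne_zero _).mpr γ.ne_zero))
      refine ⟨u '' Set.Ici N, Filter.image_mem_map (Filter.Ici_mem_atTop N), ?_⟩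
      rintro a ⟨i, hi, rfl⟩ a' ⟨j, hj, rfl⟩
      rw [Valuation.restrict_lt_iff_lt_embedding]
      refine lt_of_le_of_lt ?_ hN
      rcases le_total i j with hij | hij
      · exact le_trans (hud i j hij) (ofAdd_neg_mono hi)
      · rw [Valuation.map_sub_swap]
        exact le_trans (hud j i hij) (ofAdd_neg_mono hj)
    obtain ⟨ξ, hξ⟩ := cauchySeq_tendsto_of_complete hcauchy
    have hξ1 : Valued.v ξ ≤ 1 := by
      have h0 := valued_le_of_tendsto (z := 0) (γ := 1) hξ ?_
      · rwa [sub_zero] at h0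
      · refine Filter.Eventually.of_forall ?_
        intro n
        rw [sub_zero]
        show Valued.v (algebraMap F (v.1.adicCompletion F) (algebraMap A F (b n))) ≤ 1
        rw [valued_algebraMap_F, valuation_algebraMap_eq]
        exact v.1.intValuation_le_one (b n)
    have hξm : ∀ m : ℕ, Valued.v (ξ - u m) ≤ ↑(Multiplicative.ofAdd (-(m : ℤ))) := by
      intro m
      apply valued_le_of_tendsto hξ
      rw [Filter.eventually_atTop]
      exact ⟨m, fun n hn => hud m n hn⟩
    refine ⟨ξ, hξ1, ?_⟩
    intro s w hw
    obtain ⟨m, hm⟩ := exists_intValuation_eq v.1 (coe_primeCompl_ne_zero p0 s)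
    obtain ⟨d, hd⟩ : ∃ d : A, Ideal.Quotient.mk
        (Ideal.span {((s * sπ ^ m : p0.primeCompl) : A)}) d = c.1 (s * sπ ^ m) :=
      Ideal.Quotient.mk_surjective _
    have h1 : (s : A) ∣ (d - w) := compat_dvd p0 c s (sπ ^ m) hd hw
    have hd' := hd
    rw [mul_comm s (sπ ^ m)] at hd'
    have h2 : (π ^ m : A) ∣ (d - b m) := by
      have h2' := compat_dvd p0 c (sπ ^ m) s hd' (hbspec m)
      rwa [SubmonoidClass.coe_pow] at h2'
    refine le_trans (valued_sub_trans _ (u m) _)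
      (max_le (le_trans (hξm m) (by rw [hm])) ?_)
    refine le_trans (valued_sub_trans _
      (algebraMap F (v.1.adicCompletion F) (algebraMap A F d)) _) (max_le ?_ ?_)
    · show Valued.v (algebraMap F (v.1.adicCompletion F) (algebraMap A F (b m)) -
        algebraMap F (v.1.adicCompletion F) (algebraMap A F d)) ≤ _
      rw [← RingHom.map_sub, ← RingHom.map_sub, valued_algebraMap_F, valuation_algebraMap_eq]
      have hneg : b m - d = -(d - b m) := by ring
      rw [hneg, Valuation.map_neg]
      refine le_trans (intValuation_le_of_dvd h2 v.1) ?_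
      rw [hm]
      exact intValuation_le_pow_of_mem v.1 (Ideal.pow_mem_pow hπ2 m)
    · rw [← RingHom.map_sub, ← RingHom.map_sub, valued_algebraMap_F, valuation_algebraMap_eq]
      exact intValuation_le_of_dvd h1 v.1
  set x : Π v : {v : HeightOneSpectrum A // v.asIdeal ≠ p0}, (v.1.adicCompletionIntegers F) :=
    fun v => ⟨(hxv v).choose, (hxv v).choose_spec.1⟩ with hx
  refine ⟨x, ?_⟩
  apply Subtype.ext; funext s
  obtain ⟨w, hw⟩ : ∃ w : A, Ideal.Quotient.mk (Ideal.span {(s : A)}) w = c.1 s :=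
    Ideal.Quotient.mk_surjective _
  show Ideal.Quotient.mk _ ((exists_isApprox F p0 x s).choose) = c.1 s
  rw [← hw, Ideal.Quotient.eq, Ideal.mem_span_singleton]
  apply dvd_of_forall_intValuation_le (coe_primeCompl_ne_zero p0 s)
  intro v
  by_cases hv : v.asIdeal = p0
  · have h1 : v.intValuation (s : A) = 1 :=
      intValuation_eq_one_of_not_mem v (by rw [hv]; exact s.2)
    rw [h1]; exact v.intValuation_le_one _
  · have hspec := (exists_isApprox F p0 x s).choose_spec ⟨v, hv⟩
    have hP := (hxv ⟨v, hv⟩).choose_spec.2 s w hw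
    have h3 : Valued.v (algebraMap F (v.adicCompletion F)
        (algebraMap A F ((exists_isApprox F p0 x s).choose)) -
        algebraMap F (v.adicCompletion F) (algebraMap A F w)) ≤ v.intValuation (s : A) := by
      refine le_trans (valued_sub_trans _ ((x ⟨v, hv⟩ : v.adicCompletion F)) _)
        (max_le ?_ ?_)
      · rw [Valuation.map_sub_swap]; exact hspec
      · exact hP
    rwa [← RingHom.map_sub, ← RingHom.map_sub, valued_algebraMap_F,
      valuation_algebraMap_eq] at h3

end BetaHom

end Statement5

open IsDedekindDomain

/-- Let `A` be a Dedekind domain which is not a field, with field of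
fractions `F`, and let `p0` be a prime ideal of `A` which is either the zero ideal or a
maximal ideal.  Then there is an isomorphism of rings
`End_A(A_{(p0)}/A) ≅ ∏_p A_p`, the product being over all maximal ideals `p ≠ p0` of
`A`, where `A_p` denotes the ring of integers of the completion `F_p`.  (Since `A` is a
Dedekind domain and not a field, the maximal ideals of `A` are precisely its height-one
primes, i.e. the elements of `HeightOneSpectrum A`.) -/
theorem statement5 (A : Type*) [CommRing A] [IsDedekindDomain A]
    (F : Type*) [Field F] [Algebra A F] [IsFractionRing A F]
    (hA : ¬IsField A) (p0 : Ideal A) [p0.IsPrime]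
    (hp0 : p0 = ⊥ ∨ p0.IsMaximal) :
    Nonempty
      (Module.End A
          (Localization.AtPrime p0 ⧸
            LinearMap.range (Algebra.linearMap A (Localization.AtPrime p0))) ≃+*
        ((v : {v : HeightOneSpectrum A // v.asIdeal ≠ p0}) →
          v.1.adicCompletionIntegers F)) :=
  ⟨(Statement5.endRingEquiv p0).trans
    (RingEquiv.ofBijective (Statement5.betaHom F p0)
      ⟨Statement5.betaHom_injective F p0 hp0, Statement5.betaHom_surjective F p0 hp0⟩).symm⟩
end

section
/- Let A be a Dedekind domain which is not a field, with field of fractions F, let p0 be a prime ideal of A which is either the zero ideal or a maximal ideal, and set A_ad := End_A(A_{(p0)}/A). Then for every integer n ≥ 0 and every A-module X isomorphic to (A_{(p0)}/A)^{⊕n}, the A_ad-module T(X) := Hom_A(A_{(p0)}/A, X) is free of rank n over A_ad. -/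
/-- Let `A` be a Dedekind domain which is not a field, with field of
fractions `F`, let `p0` be a prime ideal of `A` which is either the zero ideal or a
maximal ideal, and set `A_ad := End_A(A_{(p0)}/A)`.  Then for every `n ≥ 0` and every
`A`-module `X` isomorphic to `(A_{(p0)}/A)^{⊕n}`, the `A_ad`-module
`T(X) := Hom_A(A_{(p0)}/A, X)` (an `A_ad`-module via precomposition) is free of rank `n`
over `A_ad`; that is, there is a family `t : Fin n → T(X)` which is a basis of `T(X)`
over `A_ad`, i.e. such that every element of `T(X)` is uniquely of the form
`∑ i, (t i) ∘ (e i)` with `e i ∈ A_ad`. -/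
theorem statement6 (A : Type*) [CommRing A] [IsDedekindDomain A]
    (F : Type*) [Field F] [Algebra A F] [IsFractionRing A F]
    (hA : ¬IsField A) (p0 : Ideal A) [p0.IsPrime]
    (hp0 : p0 = ⊥ ∨ p0.IsMaximal)
    (n : ℕ) (X : Type*) [AddCommGroup X] [Module A X]
    (hX : Nonempty (X ≃ₗ[A]
      (Fin n → (Localization.AtPrime p0 ⧸
        LinearMap.range (Algebra.linearMap A (Localization.AtPrime p0)))))) :
    ∃ t : Fin n →
        ((Localization.AtPrime p0 ⧸
            LinearMap.range (Algebra.linearMap A (Localization.AtPrime p0))) →ₗ[A] X),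
      Function.Bijective
        (fun e : Fin n → Module.End A
            (Localization.AtPrime p0 ⧸
              LinearMap.range (Algebra.linearMap A (Localization.AtPrime p0))) =>
          ∑ i, (t i) ∘ₗ (e i)) := by
  set M := Localization.AtPrime p0 ⧸
      LinearMap.range (Algebra.linearMap A (Localization.AtPrime p0)) with hM
  obtain ⟨φ⟩ := hX
  refine ⟨fun i => φ.symm.toLinearMap ∘ₗ LinearMap.single A (fun _ : Fin n => M) i, ?_, ?_⟩
  · intro e e' h
    funext j
    refine LinearMap.ext fun x => ?_
    have := congrArg (fun g : M →ₗ[A] X =>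
      LinearMap.proj (R := A) (φ := fun _ : Fin n => M) j ∘ₗ (φ.toLinearMap ∘ₗ g)) h
    have h2 := DFunLike.congr_fun this x
    simpa [LinearMap.sum_apply, Pi.single_apply, Finset.sum_ite_eq',
      LinearMap.comp_apply] using h2
  · intro g
    refine ⟨fun i => LinearMap.proj i ∘ₗ (φ.toLinearMap ∘ₗ g), ?_⟩
    refine LinearMap.ext fun x => ?_
    simp only [LinearMap.sum_apply, LinearMap.comp_apply, LinearEquiv.coe_coe]
    rw [← map_sum]
    have : (∑ i, (LinearMap.single A (fun _ : Fin n => M) i)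
        ((LinearMap.proj (R := A) i) (φ (g x)))) = φ (g x) := by
      funext j
      simp [Pi.single_apply, Finset.sum_apply]
    rw [this, φ.symm_apply_apply]
end

section
/- Let A be a Dedekind domain which is not a field, with field of fractions F, let p0 be a prime ideal of A which is either the zero ideal or a maximal ideal, and let M be a finitely generated torsion-free A-module of rank d, i.e., with dim_F(M ⊗_A F) = d. Then there is an isomorphism of A-modules M ⊗_A (A_{(p0)}/A) ≅ (A_{(p0)}/A)^{⊕d}. -/
set_option linter.unusedSectionVars false
set_option linter.unusedVariables false
set_option linter.deprecated false



open scoped TensorProduct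

open scoped DirectSum

namespace Statement8Aux

variable {A : Type*} [CommRing A]

/-- The submodule of elements killed by some power of the ideal `q`. -/
def torsionPow (q : Ideal A) (N : Type*) [AddCommGroup N] [Module A N] : Submodule A N where
  carrier := {x | ∃ n : ℕ, ∀ a ∈ q ^ n, a • x = 0}
  zero_mem' := ⟨0, fun a _ => smul_zero a⟩
  add_mem' := by
    rintro x y ⟨m, hm⟩ ⟨n, hn⟩
    refine ⟨m + n, fun a ha => ?_⟩
    rw [smul_add, hm a (Ideal.pow_le_pow_right (le_add_right le_rfl) ha),
      hn a (Ideal.pow_le_pow_right (le_add_left le_rfl) ha), add_zero]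
  smul_mem' := by
    rintro c x ⟨n, hn⟩
    exact ⟨n, fun a ha => by rw [smul_comm, hn a ha, smul_zero]⟩

variable {q : Ideal A} {N : Type*} [AddCommGroup N] [Module A N]

theorem mem_torsionPow {x : N} : x ∈ torsionPow q N ↔ ∃ n : ℕ, ∀ a ∈ q ^ n, a • x = 0 :=
  Iff.rfl

theorem torsionPow_le {J : Ideal A} (h : J ≤ q) : torsionPow q N ≤ torsionPow J N := by
  rintro x ⟨n, hn⟩
  exact ⟨n, fun a ha => hn a (Ideal.pow_right_mono h n ha)⟩

theorem coprime_pow_decomp (hq : q.IsMaximal) {s : A} (hs : s ∉ q) (n : ℕ) :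
    ∃ u ∈ q ^ n, ∃ c : A, u + c * s = 1 := by
  obtain ⟨y, i, hi, hyi⟩ := hq.exists_inv hs
  have hcop : IsCoprime q (Ideal.span {s}) := by
    rw [Ideal.isCoprime_iff_sup_eq, Ideal.eq_top_iff_one]
    exact Submodule.mem_sup.mpr ⟨i, hi, y * s, Ideal.mem_span_singleton'.mpr ⟨y, rfl⟩, by
      rw [← hyi]; ring⟩
  have := (hcop.pow_left (m := n))
  rw [Ideal.isCoprime_iff_sup_eq, Ideal.eq_top_iff_one] at this
  obtain ⟨u, hu, v, hv, huv⟩ := Submodule.mem_sup.mp this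
  obtain ⟨c, rfl⟩ := Ideal.mem_span_singleton'.mp hv
  exact ⟨u, hu, c, huv⟩

theorem smul_eq_zero_torsionPow (hq : q.IsMaximal) {s : A} (hs : s ∉ q)
    {z : torsionPow q N} (h : s • z = 0) : z = 0 := by
  obtain ⟨n, hn⟩ := z.2
  obtain ⟨u, hu, c, huc⟩ := coprime_pow_decomp hq hs n
  have : (1 : A) • z = 0 := by
    rw [← huc, add_smul, mul_smul, h, smul_zero, add_zero]
    ext
    exact hn u hu
  simpa using this

end Statement8Aux

namespace Statement8Aux
variable {A : Type*} [CommRing A] {q : Ideal A} {N : Type*} [AddCommGroup N] [Module A N]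

theorem smul_bijective_torsionPow (hq : q.IsMaximal) {s : A} (hs : s ∉ q) :
    Function.Bijective (fun x : torsionPow q N => s • x) := by
  constructor
  · intro x y hxy
    have h : s • (x - y) = 0 := by rw [smul_sub, sub_eq_zero]; exact hxy
    have := smul_eq_zero_torsionPow hq hs h
    rwa [sub_eq_zero] at this
  · intro x
    obtain ⟨n, hn⟩ := x.2
    obtain ⟨u, hu, c, huc⟩ := coprime_pow_decomp hq hs n
    refine ⟨c • x, ?_⟩
    have : (1 : A) • x = x := one_smul _ _
    calc s • c • x = (u + c * s) • x - u • x := by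
          rw [smul_smul, mul_comm s c, add_smul]; abel
      _ = x := by
          rw [huc, one_smul]
          have hu0 : u • x = 0 := by ext; exact hn u hu
          rw [hu0, sub_zero]

theorem isLocalizedModule_torsionPow (hq : q.IsMaximal) :
    IsLocalizedModule q.primeCompl
      (LinearMap.id : torsionPow q N →ₗ[A] torsionPow q N) where
  map_units s := by
    rw [Module.End.isUnit_iff]
    exact smul_bijective_torsionPow hq s.2
  surj y := ⟨(y, 1), by simp⟩
  exists_of_eq h := ⟨1, by simpa using h⟩

end Statement8Aux

namespace Statement8Aux
variable {A : Type*} [CommRing A]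

/-- Transport a module structure along an `A`-linear equivalence. -/
def moduleOfEquiv {B : Type*} [CommSemiring B] [Algebra A B]
    {P N₀ : Type*} [AddCommGroup P] [Module A P] [Module B P] [IsScalarTower A B P]
    [AddCommGroup N₀] [Module A N₀] (e : N₀ ≃ₗ[A] P) : Module B N₀ where
  smul b x := e.symm (b • e x)
  one_smul x := by show e.symm ((1 : B) • e x) = x; simp
  mul_smul b c x := by
    show e.symm ((b * c) • e x) = e.symm (b • e (e.symm (c • e x)))
    rw [mul_smul, e.apply_symm_apply]
  smul_zero b := by show e.symm (b • e 0) = 0; simp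
  smul_add b x y := by
    show e.symm (b • e (x + y)) = e.symm (b • e x) + e.symm (b • e y)
    rw [map_add, smul_add, map_add]
  add_smul b c x := by
    show e.symm ((b + c) • e x) = e.symm (b • e x) + e.symm (c • e x)
    rw [add_smul, map_add]
  zero_smul x := by show e.symm ((0 : B) • e x) = 0; simp

theorem isScalarTower_moduleOfEquiv {B : Type*} [CommSemiring B] [Algebra A B]
    {P N₀ : Type*} [AddCommGroup P] [Module A P] [Module B P] [IsScalarTower A B P]
    [AddCommGroup N₀] [Module A N₀] (e : N₀ ≃ₗ[A] P) :
    letI := moduleOfEquiv (A := A) (B := B) e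
    IsScalarTower A B N₀ := by
  letI := moduleOfEquiv (A := A) (B := B) e
  refine ⟨fun a b x => ?_⟩
  show e.symm ((a • b) • e x) = a • e.symm (b • e x)
  rw [smul_assoc, map_smul]

end Statement8Aux

namespace Statement8Aux

theorem tensor_torsionPow_equiv
    {A : Type*} [CommRing A] [IsDedekindDomain A]
    (F : Type*) [Field F] [Algebra A F] [IsFractionRing A F]
    (q : Ideal A) (hq : q.IsMaximal) (hq0 : q ≠ ⊥)
    (N : Type*) [AddCommGroup N] [Module A N]
    (M : Type*) [AddCommGroup M] [Module A M] [Module.Finite A M]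
    (htf : ∀ (a : A) (m : M), a • m = 0 → a = 0 ∨ m = 0)
    (d : ℕ) (hd : Module.finrank F (F ⊗[A] M) = d) :
    Nonempty ((M ⊗[A] ↥(torsionPow q N)) ≃ₗ[A] (Fin d → ↥(torsionPow q N))) := by
  classical
  set B := Localization.AtPrime q with hB
  haveI : q.IsPrime := hq.isPrime
  -- the torsion part is a module over the localization
  haveI hloc : IsLocalizedModule q.primeCompl
      (LinearMap.id : torsionPow q N →ₗ[A] torsionPow q N) :=
    isLocalizedModule_torsionPow hq
  let e0 : LocalizedModule q.primeCompl (torsionPow q N) ≃ₗ[A] torsionPow q N :=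
    IsLocalizedModule.iso q.primeCompl (LinearMap.id : torsionPow q N →ₗ[A] torsionPow q N)
  letI : Module B ↥(torsionPow q N) := moduleOfEquiv (A := A) (B := B) e0.symm
  haveI : IsScalarTower A B ↥(torsionPow q N) := isScalarTower_moduleOfEquiv e0.symm
  -- the localized module M_q
  let Mq := LocalizedModule q.primeCompl M
  haveI : Module.Finite B Mq :=
    Module.Finite.of_isLocalizedModule q.primeCompl (LocalizedModule.mkLinearMap q.primeCompl M)
  haveI : IsDomain B := by infer_instance
  haveI : IsDiscreteValuationRing B :=
    IsLocalization.AtPrime.isDiscreteValuationRing_of_dedekind_domain A hq0 B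
  haveI : NoZeroSMulDivisors B Mq := by
    refine ⟨fun {r x} h => ?_⟩
    obtain ⟨⟨a, s⟩, rfl⟩ := IsLocalization.mk'_surjective q.primeCompl r
    dsimp only at h ⊢
    induction x using LocalizedModule.induction_on with
    | _ m t =>
      rw [← Localization.mk_eq_mk'_apply, LocalizedModule.mk_smul_mk, ← LocalizedModule.zero_mk (s * t),
        LocalizedModule.mk_eq] at h
      obtain ⟨u, hu⟩ := h
      simp only [Submonoid.smul_def, smul_zero, ← mul_smul] at hu
      rcases htf _ _ hu with h0 | h0
      · left
        have hu0 : (u : A) ≠ 0 := fun hc => u.2 (by rw [hc]; exact q.zero_mem)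
        have hst0 : ((s * t : q.primeCompl) : A) ≠ 0 := fun hc =>
          (s * t).2 (by rw [hc]; exact q.zero_mem)
        have ha : a = 0 := by
          rcases mul_eq_zero.mp h0 with h1 | h1
          · exact absurd h1 hu0
          · rcases mul_eq_zero.mp h1 with h2 | h2
            · exact absurd h2 hst0
            · exact h2
        rw [ha, IsLocalization.mk'_zero]
      · right
        rw [h0, LocalizedModule.zero_mk]
  haveI : Module.Free B Mq := Module.free_of_finite_type_torsion_free'
  -- rank of Mq is d
  let ι := Module.Free.ChooseBasisIndex B Mq
  let b : Module.Basis ι B Mq := Module.Free.chooseBasis B Mq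
  have hu : ∀ s : q.primeCompl, IsUnit (algebraMap A F s) := fun s =>
    isUnit_iff_ne_zero.mpr fun h => s.2 (by
      have : (s : A) = 0 := (IsFractionRing.to_map_eq_zero_iff (K := F)).mp h
      rw [this]; exact q.zero_mem)
  letI : Algebra B F := (IsLocalization.lift hu).toAlgebra
  haveI : IsScalarTower A B F :=
    IsScalarTower.of_algebraMap_eq fun a => (IsLocalization.lift_eq hu a).symm
  let bc := IsLocalizedModule.isBaseChange q.primeCompl B
    (LocalizedModule.mkLinearMap q.primeCompl M)
  have hcard : Fintype.card ι = d := by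
    let e1 : (F ⊗[B] (B ⊗[A] M)) ≃ₗ[F] (F ⊗[A] M) :=
      TensorProduct.AlgebraTensorModule.cancelBaseChange A B F F M
    let e2 : (F ⊗[B] Mq) ≃ₗ[F] (F ⊗[B] (B ⊗[A] M)) :=
      LinearEquiv.baseChange B F Mq (B ⊗[A] M) bc.equiv.symm
    let bF : Module.Basis ι F (F ⊗[B] Mq) := b.baseChange F
    have := Module.finrank_eq_card_basis (bF.map (e2 ≪≫ₗ e1))
    rw [hd] at this
    exact this.symm
  let efin : ι ≃ Fin d := Fintype.equivFinOfCardEq hcard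
  -- the chain of isomorphisms
  refine ⟨?_⟩
  exact (TensorProduct.comm A M _) ≪≫ₗ
    ((TensorProduct.AlgebraTensorModule.cancelBaseChange A B B (torsionPow q N) M).symm.restrictScalars A) ≪≫ₗ
    ((TensorProduct.congr (LinearEquiv.refl B ↥(torsionPow q N)) bc.equiv).restrictScalars A) ≪≫ₗ
    ((TensorProduct.congr (LinearEquiv.refl B ↥(torsionPow q N)) b.repr).restrictScalars A) ≪≫ₗ
    ((TensorProduct.finsuppScalarRight B B ↥(torsionPow q N) ι).restrictScalars A) ≪≫ₗ
    (Finsupp.lcongr efin (LinearEquiv.refl A ↥(torsionPow q N))) ≪≫ₗ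
    (Finsupp.linearEquivFunOnFinite A ↥(torsionPow q N) (Fin d))

end Statement8Aux

namespace Statement8Aux

variable {A : Type*} [CommRing A] [IsDedekindDomain A]
variable {N : Type*} [AddCommGroup N] [Module A N]

theorem mem_iSup_torsionPow_of_finset (fs : Finset (Ideal A)) (hp : ∀ p ∈ fs, Prime p)
    (e : Ideal A → ℕ) :
    ∀ t : N, (∀ a ∈ (∏ p ∈ fs, p ^ e p), a • t = 0) →
      t ∈ ⨆ q : MaximalSpectrum A, torsionPow q.asIdeal N := by
  classical
  induction fs using Finset.induction_on with
  | empty =>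
    intro t ht
    have : t = 0 := by simpa using ht 1 (by simp)
    simp [this]
  | insert q fs hq ih =>
    intro t ht
    rw [Finset.prod_insert hq] at ht
    have hqprime : Prime q := hp q (Finset.mem_insert_self q fs)
    have hqmax : q.IsMaximal := by
      refine Ideal.IsPrime.isMaximal (Ideal.isPrime_of_prime hqprime) ?_
      simpa using hqprime.ne_zero
    -- coprimality of q ^ e q and the rest
    have hcop : IsCoprime (q ^ e q) (∏ p ∈ fs, p ^ e p) := by
      refine IsCoprime.pow_left (IsCoprime.prod_right fun p hpfs => ?_)
      have hpprime : Prime p := hp p (Finset.mem_insert_of_mem hpfs)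
      have hpmax : p.IsMaximal := by
        refine Ideal.IsPrime.isMaximal (Ideal.isPrime_of_prime hpprime) ?_
        simpa using hpprime.ne_zero
      refine IsCoprime.pow_right ?_
      exact Ideal.isCoprime_iff_sup_eq.mpr
        (Ideal.IsMaximal.coprime_of_ne hqmax hpmax (fun h => hq (h ▸ hpfs)))
    rw [Ideal.isCoprime_iff_sup_eq, Ideal.eq_top_iff_one] at hcop
    obtain ⟨u, hu, v, hv, huv⟩ := Submodule.mem_sup.mp hcop
    have ht' : t = u • t + v • t := by rw [← add_smul, huv, one_smul]
    rw [ht']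
    refine Submodule.add_mem _ ?_ ?_
    · -- u • t is killed by the rest
      refine ih (fun p hpfs => hp p (Finset.mem_insert_of_mem hpfs)) (u • t) fun a ha => ?_
      rw [smul_smul, mul_comm a u]
      exact ht _ (Ideal.mul_mem_mul hu ha)
    · -- v • t is killed by q ^ e q
      refine Submodule.mem_iSup_of_mem ⟨q, hqmax⟩ ⟨e q, fun a ha => ?_⟩
      rw [smul_smul]
      exact ht _ (Ideal.mul_mem_mul ha hv)

end Statement8Aux

namespace Statement8Aux

variable {A : Type*} [CommRing A] [IsDedekindDomain A]
variable {N : Type*} [AddCommGroup N] [Module A N]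

theorem iSup_torsionPow_eq_top (hN : ∀ t : N, ∃ s : A, s ≠ 0 ∧ s • t = 0) :
    ⨆ q : MaximalSpectrum A, torsionPow q.asIdeal N = ⊤ := by
  classical
  rw [eq_top_iff]
  intro t _
  obtain ⟨s, hs0, hst⟩ := hN t
  have hI : Ideal.span {s} ≠ ⊥ := by
    rwa [Ne, Ideal.span_singleton_eq_bot]
  have hI0 : Ideal.span {s} ≠ 0 := hI
  -- factor the ideal (s)
  have hassoc := UniqueFactorizationMonoid.factors_prod hI0
  rw [associated_iff_eq] at hassoc
  have hfac : Ideal.span {s} =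
      ∏ p ∈ (UniqueFactorizationMonoid.factors (Ideal.span {s})).toFinset,
        p ^ (UniqueFactorizationMonoid.factors (Ideal.span {s})).count p := by
    rw [← Finset.prod_multiset_count, hassoc]
  refine mem_iSup_torsionPow_of_finset
    (UniqueFactorizationMonoid.factors (Ideal.span {s})).toFinset
    (fun p hp => UniqueFactorizationMonoid.prime_of_factor p (Multiset.mem_toFinset.mp hp))
    (fun p => (UniqueFactorizationMonoid.factors (Ideal.span {s})).count p) t fun a ha => ?_
  rw [← hfac] at ha
  obtain ⟨c, rfl⟩ := Ideal.mem_span_singleton'.mp ha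
  rw [mul_smul, hst, smul_zero]

theorem independent_torsionPow :
    iSupIndep (fun q : MaximalSpectrum A => torsionPow q.asIdeal N) := by
  classical
  intro q
  rw [Submodule.disjoint_def]
  intro x hxq hxrest
  rw [iSup_subtype'] at hxrest
  obtain ⟨fs, hfs⟩ := Submodule.mem_iSup_iff_exists_finset.mp hxrest
  -- x is killed by a power of the product of the other primes
  set J : Ideal A := ∏ j ∈ fs, (j : {j : MaximalSpectrum A // j ≠ q}).1.asIdeal with hJ
  have hxJ : x ∈ torsionPow J N := by
    refine ?_
    have hle : (⨆ j ∈ fs, torsionPow (j : {j : MaximalSpectrum A // j ≠ q}).1.asIdeal N)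
        ≤ torsionPow J N := by
      refine iSup₂_le fun j hj => torsionPow_le ?_
      rw [hJ, ← Finset.prod_erase_mul fs _ hj]
      exact Ideal.mul_le_right
    exact hle hfs
  obtain ⟨n, hn⟩ := hxq
  obtain ⟨m, hm⟩ := hxJ
  have hcop : IsCoprime (q.asIdeal ^ n) (J ^ m) := by
    refine IsCoprime.pow (IsCoprime.prod_right fun j hj => ?_)
    exact Ideal.isCoprime_iff_sup_eq.mpr
      (Ideal.IsMaximal.coprime_of_ne q.2 j.1.2 fun h => j.2 (MaximalSpectrum.ext h).symm)
  rw [Ideal.isCoprime_iff_sup_eq, Ideal.eq_top_iff_one] at hcop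
  obtain ⟨u, hu, v, hv, huv⟩ := Submodule.mem_sup.mp hcop
  calc x = (1 : A) • x := (one_smul _ _).symm
    _ = u • x + v • x := by rw [← huv, add_smul]
    _ = 0 := by rw [hn u hu, hm v hv, add_zero]

end Statement8Aux

namespace Statement8Aux

theorem tensor_equiv_directSum
    {A : Type*} [CommRing A] [IsDedekindDomain A]
    (F : Type*) [Field F] [Algebra A F] [IsFractionRing A F]
    (hA : ¬IsField A)
    (N : Type*) [AddCommGroup N] [Module A N]
    (hN : ∀ t : N, ∃ s : A, s ≠ 0 ∧ s • t = 0)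
    (M : Type*) [AddCommGroup M] [Module A M] [Module.Finite A M]
    (htf : ∀ (a : A) (m : M), a • m = 0 → a = 0 ∨ m = 0)
    (d : ℕ) (hd : Module.finrank F (F ⊗[A] M) = d) :
    Nonempty ((M ⊗[A] N) ≃ₗ[A]
      ⨁ q : MaximalSpectrum A, (Fin d → ↥(torsionPow q.asIdeal N))) := by
  classical
  have hint : DirectSum.IsInternal (fun q : MaximalSpectrum A => torsionPow q.asIdeal N) :=
    (DirectSum.isInternal_submodule_iff_iSupIndep_and_iSup_eq_top _).mpr
      ⟨independent_torsionPow, iSup_torsionPow_eq_top hN⟩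
  let e1 : (⨁ q : MaximalSpectrum A, ↥(torsionPow q.asIdeal N)) ≃ₗ[A] N :=
    LinearEquiv.ofBijective (DirectSum.coeLinearMap _) hint
  have key : ∀ q : MaximalSpectrum A,
      Nonempty ((M ⊗[A] ↥(torsionPow q.asIdeal N)) ≃ₗ[A]
        (Fin d → ↥(torsionPow q.asIdeal N))) := fun q =>
    tensor_torsionPow_equiv F q.asIdeal q.2
      (Ring.ne_bot_of_isMaximal_of_not_isField q.2 hA) N M htf d hd
  let E := fun q => (key q).some
  exact ⟨(TensorProduct.congr (LinearEquiv.refl A M) e1.symm) ≪≫ₗ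
    (TensorProduct.directSumRight A A M (fun q : MaximalSpectrum A => ↥(torsionPow q.asIdeal N))) ≪≫ₗ
    (DFinsupp.mapRange.linearEquiv E)⟩

end Statement8Aux


open Statement8Aux in
/-- Let `A` be a Dedekind domain which is not a field, with field of
fractions `F`, let `p0` be a prime ideal of `A` which is either the zero ideal or a
maximal ideal, and let `M` be a finitely generated torsion-free `A`-module of rank `d`,
i.e. with `dim_F (F ⊗_A M) = d`.  Then there is an isomorphism of `A`-modules
`M ⊗_A (A_{(p0)}/A) ≅ (A_{(p0)}/A)^{⊕d}`. -/
theorem statement8 (A : Type*) [CommRing A] [IsDedekindDomain A]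
    (F : Type*) [Field F] [Algebra A F] [IsFractionRing A F]
    (hA : ¬IsField A) (p0 : Ideal A) [p0.IsPrime]
    (hp0 : p0 = ⊥ ∨ p0.IsMaximal)
    (M : Type*) [AddCommGroup M] [Module A M] [Module.Finite A M]
    (htf : ∀ (a : A) (m : M), a • m = 0 → a = 0 ∨ m = 0)
    (d : ℕ) (hd : Module.finrank F (F ⊗[A] M) = d) :
    Nonempty
      ((M ⊗[A] (Localization.AtPrime p0 ⧸
          LinearMap.range (Algebra.linearMap A (Localization.AtPrime p0)))) ≃ₗ[A]
        (Fin d → (Localization.AtPrime p0 ⧸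
          LinearMap.range (Algebra.linearMap A (Localization.AtPrime p0))))) := by
  classical
  set L := Localization.AtPrime p0 with hL
  set T := L ⧸ LinearMap.range (Algebra.linearMap A L) with hT
  -- every element of T is torsion
  have hN : ∀ t : T, ∃ s : A, s ≠ 0 ∧ s • t = 0 := by
    intro t
    obtain ⟨x, rfl⟩ := Submodule.Quotient.mk_surjective _ t
    obtain ⟨⟨a, s⟩, hx⟩ := IsLocalization.mk'_surjective p0.primeCompl x
    dsimp only at hx
    refine ⟨s, fun hc => s.2 (by rw [hc]; exact p0.zero_mem), ?_⟩
    rw [← Submodule.Quotient.mk_smul, Submodule.Quotient.mk_eq_zero]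
    refine ⟨a, ?_⟩
    rw [Algebra.linearMap_apply, ← hx, Algebra.smul_def, IsLocalization.mul_mk'_eq_mk'_of_mul]
    rw [IsLocalization.mk'_mul_cancel_left]
  -- the standard module of rank d
  have htf' : ∀ (a : A) (m : Fin d →₀ A), a • m = 0 → a = 0 ∨ m = 0 := by
    intro a m h
    by_cases ha : a = 0
    · exact Or.inl ha
    · refine Or.inr (Finsupp.ext fun i => ?_)
      have := DFunLike.congr_fun h i
      simp only [Finsupp.smul_apply, smul_eq_mul, Finsupp.coe_zero, Pi.zero_apply] at this
      rcases mul_eq_zero.mp this with h1 | h1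
      · exact absurd h1 ha
      · exact h1
  have hd' : Module.finrank F (F ⊗[A] (Fin d →₀ A)) = d := by
    have b : Module.Basis (Fin d) F (F ⊗[A] (Fin d →₀ A)) :=
      Module.Basis.baseChange F (Finsupp.basisSingleOne (R := A) (ι := Fin d))
    rw [Module.finrank_eq_card_basis b, Fintype.card_fin]
  obtain ⟨e1⟩ := tensor_equiv_directSum F hA T hN M htf d hd
  obtain ⟨e2⟩ := tensor_equiv_directSum F hA T hN (Fin d →₀ A) htf' d hd'
  refine ⟨e1 ≪≫ₗ e2.symm ≪≫ₗ ?_⟩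
  exact (TensorProduct.finsuppScalarLeft A T (Fin d)) ≪≫ₗ
    (Finsupp.linearEquivFunOnFinite A T (Fin d))
end

section
/- Let A be a commutative ring, p0 ⊆ A a prime ideal, and W an A-module such that for every a ∈ A \ p0 the scalar multiplication map W → W, x ↦ a·x, is surjective. Let M ⊆ W be an A-submodule. Then the assignment x ↦ (a·x) ⊗ (1/a), for any choice of a ∈ A \ p0 with a·x ∈ M, gives a well-defined A-linear map Div_W^{(p0)}(M) → M ⊗_A A_{(p0)}, and the resulting sequence of A-modules 0 → Div_W^{(p0)}({0}) → Div_W^{(p0)}(M) → M ⊗_A A_{(p0)} → 0 is exact, where the first map is the inclusion. -/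
/-- The prime-to-`p0` division hull `Div_W^{(p0)}(M)` of a submodule `M` of the
`A`-module `W`: the set of all `x ∈ W` such that `a • x ∈ M` for some `a ∈ A \ p0`. -/
def divisionHull {A : Type*} [CommRing A] (p0 : Ideal A) [p0.IsPrime] {W : Type*}
    [AddCommGroup W] [Module A W] (M : Submodule A W) : Submodule A W where
  carrier := {x : W | ∃ a ∈ p0.primeCompl, a • x ∈ M}
  zero_mem' := ⟨1, p0.primeCompl.one_mem, by simp⟩
  add_mem' := by
    rintro x y ⟨a, ha, hax⟩ ⟨b, hb, hby⟩
    refine ⟨a * b, p0.primeCompl.mul_mem ha hb, ?_⟩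
    rw [smul_add]
    refine M.add_mem ?_ ?_
    · rw [mul_comm, mul_smul]; exact M.smul_mem b hax
    · rw [mul_smul]; exact M.smul_mem a hby
  smul_mem' := by
    rintro c x ⟨a, ha, hax⟩
    exact ⟨a, ha, by rw [smul_comm]; exact M.smul_mem c hax⟩

section Aux

variable {A : Type*} [CommRing A] (p0 : Ideal A) [p0.IsPrime] {W : Type*}
    [AddCommGroup W] [Module A W] (M : Submodule A W)

/-- Independence of the choice of `a`. -/
theorem dh_key (x : W) {a b : A} (ha : a ∈ p0.primeCompl) (hb : b ∈ p0.primeCompl)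
    (h1 : a • x ∈ M) (h2 : b • x ∈ M) :
    ((⟨a • x, h1⟩ : M) ⊗ₜ[A] Localization.mk 1 ⟨a, ha⟩ :
        TensorProduct A M (Localization.AtPrime p0))
      = (⟨b • x, h2⟩ : M) ⊗ₜ[A] Localization.mk 1 ⟨b, hb⟩ := by
  have e1 : (Localization.mk 1 ⟨a, ha⟩ : Localization.AtPrime p0)
      = b • Localization.mk 1 ⟨a * b, p0.primeCompl.mul_mem ha hb⟩ := by
    rw [Localization.smul_mk, smul_eq_mul, mul_one, Localization.mk_eq_mk_iff,
      Localization.r_iff_exists]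
    exact ⟨1, by push_cast; ring⟩
  have e2 : (Localization.mk 1 ⟨b, hb⟩ : Localization.AtPrime p0)
      = a • Localization.mk 1 ⟨a * b, p0.primeCompl.mul_mem ha hb⟩ := by
    rw [Localization.smul_mk, smul_eq_mul, mul_one, Localization.mk_eq_mk_iff,
      Localization.r_iff_exists]
    exact ⟨1, by push_cast; ring⟩
  rw [e1, e2, TensorProduct.tmul_smul, TensorProduct.tmul_smul,
    TensorProduct.smul_tmul', TensorProduct.smul_tmul']
  congr 1
  ext
  simp [smul_smul, mul_comm]

/-- The underlying function of the division-hull map. -/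
noncomputable def dhFun (x : divisionHull p0 M) : TensorProduct A M (Localization.AtPrime p0) :=
  (⟨_, x.2.choose_spec.2⟩ : M) ⊗ₜ[A]
    Localization.mk 1 ⟨x.2.choose, x.2.choose_spec.1⟩

theorem dhFun_spec (x : divisionHull p0 M) {a : A} (ha : a ∈ p0.primeCompl)
    (hm : a • (x : W) ∈ M) :
    dhFun p0 M x = (⟨a • (x : W), hm⟩ : M) ⊗ₜ[A] Localization.mk 1 ⟨a, ha⟩ :=
  dh_key p0 M (x : W) x.2.choose_spec.1 ha x.2.choose_spec.2 hm

/-- The division-hull map as a linear map. -/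
noncomputable def dhMap : divisionHull p0 M →ₗ[A] TensorProduct A M (Localization.AtPrime p0) where
  toFun := dhFun p0 M
  map_add' := by
    intro x y
    obtain ⟨a, ha, hax⟩ := x.2
    obtain ⟨b, hb, hby⟩ := y.2
    have hab : a * b ∈ p0.primeCompl := p0.primeCompl.mul_mem ha hb
    have habx : (a * b) • (x : W) ∈ M := by
      rw [mul_comm, mul_smul]; exact M.smul_mem b hax
    have haby : (a * b) • (y : W) ∈ M := by
      rw [mul_smul]; exact M.smul_mem a hby
    have habxy : (a * b) • ((x + y : divisionHull p0 M) : W) ∈ M := by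
      rw [Submodule.coe_add, smul_add]; exact M.add_mem habx haby
    rw [dhFun_spec p0 M (x + y) hab habxy, dhFun_spec p0 M x hab habx,
      dhFun_spec p0 M y hab haby, ← TensorProduct.add_tmul]
    congr 1
    ext
    simp [smul_add]
  map_smul' := by
    intro r x
    obtain ⟨a, ha, hax⟩ := x.2
    have harx : a • ((r • x : divisionHull p0 M) : W) ∈ M := by
      rw [Submodule.coe_smul, smul_comm]; exact M.smul_mem r hax
    show dhFun p0 M (r • x) = (RingHom.id A) r • dhFun p0 M x
    rw [dhFun_spec p0 M (r • x) ha harx, dhFun_spec p0 M x ha hax]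
    rw [RingHom.id_apply, TensorProduct.smul_tmul']
    congr 1
    ext
    simp only [Submodule.coe_smul, SetLike.val_smul]
    rw [smul_comm]

/-- Comparison map to the localized module of `W`. -/
noncomputable def dhComp : TensorProduct A M (Localization.AtPrime p0) →ₗ[A]
    LocalizedModule p0.primeCompl W :=
  TensorProduct.lift
    (LinearMap.mk₂ A
      (fun (m : M) (l : Localization.AtPrime p0) =>
        l • LocalizedModule.mk (m : W) 1)
      (fun m m' l => by
        have : LocalizedModule.mk ((m : W) + (m' : W)) (1 : p0.primeCompl)
            = LocalizedModule.mk (m : W) 1 + LocalizedModule.mk (m' : W) 1 := by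
          rw [LocalizedModule.mk_add_mk]; simp
        rw [Submodule.coe_add, this, smul_add])
      (fun c m l => by
        rw [Submodule.coe_smul, ← LocalizedModule.smul'_mk, smul_comm])
      (fun l l' m => by rw [add_smul])
      (fun c l m => by rw [smul_assoc]))

theorem dhComp_dhMap (x : divisionHull p0 M) :
    dhComp p0 M (dhMap p0 M x) = LocalizedModule.mk (x : W) 1 := by
  obtain ⟨a, ha, hax⟩ := x.2
  have : dhMap p0 M x = (⟨a • (x : W), hax⟩ : M) ⊗ₜ[A] Localization.mk 1 ⟨a, ha⟩ :=
    dhFun_spec p0 M x ha hax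
  rw [this]
  unfold dhComp
  rw [TensorProduct.lift.tmul]
  dsimp only [LinearMap.mk₂_apply]
  rw [LocalizedModule.mk_smul_mk, one_smul, mul_one]
  rw [LocalizedModule.mk_eq]
  exact ⟨1, by simp⟩

end Aux

/-- Let `A` be a commutative ring, `p0 ⊆ A` a prime ideal, and `W` an
`A`-module such that for every `a ∈ A \ p0` scalar multiplication by `a` on `W` is
surjective.  Let `M ⊆ W` be an `A`-submodule.  Then `x ↦ (a • x) ⊗ (1/a)` (for any
`a ∈ A \ p0` with `a • x ∈ M`) is a well-defined `A`-linear map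
`Div_W^{(p0)}(M) → M ⊗_A A_{(p0)}`, and the sequence
`0 → Div_W^{(p0)}({0}) → Div_W^{(p0)}(M) → M ⊗_A A_{(p0)} → 0`, whose first map is the
inclusion, is exact. -/
theorem statement9 (A : Type*) [CommRing A] (p0 : Ideal A) [p0.IsPrime]
    (W : Type*) [AddCommGroup W] [Module A W]
    (hsurj : ∀ a ∈ p0.primeCompl, Function.Surjective fun x : W => a • x)
    (M : Submodule A W) :
    ∃ f : divisionHull p0 M →ₗ[A] TensorProduct A M (Localization.AtPrime p0),
      (∀ (x : divisionHull p0 M) (a : A) (ha : a ∈ p0.primeCompl) (hm : a • (x : W) ∈ M),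
        f x = (⟨a • (x : W), hm⟩ : M) ⊗ₜ[A] Localization.mk 1 ⟨a, ha⟩) ∧
      Function.Surjective f ∧
      LinearMap.ker f
        = Submodule.comap (divisionHull p0 M).subtype (divisionHull p0 (⊥ : Submodule A W)) := by
  refine ⟨dhMap p0 M, fun x a ha hm => dhFun_spec p0 M x ha hm, ?_, ?_⟩
  · -- surjectivity
    intro z
    induction z using TensorProduct.induction_on with
    | zero => exact ⟨0, map_zero _⟩
    | tmul m l =>
      induction l using Localization.induction_on with
      | H rs =>
        obtain ⟨r, s⟩ := rs
        obtain ⟨w, hw⟩ := hsurj s.1 s.2 (r • (m : W))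
        simp only at hw
        have hwM : (s : A) • w ∈ M := by rw [hw]; exact M.smul_mem r m.2
        refine ⟨⟨w, ⟨s, s.2, hwM⟩⟩, ?_⟩
        rw [show (dhMap p0 M) ⟨w, ⟨s, s.2, hwM⟩⟩
            = (⟨(s : A) • w, hwM⟩ : M) ⊗ₜ[A] Localization.mk 1 s
          from dhFun_spec p0 M _ s.2 hwM]
        have hm' : (⟨(s : A) • w, hwM⟩ : M) = r • m := by ext; simp [hw]
        rw [hm', TensorProduct.smul_tmul, Localization.smul_mk, smul_eq_mul, mul_one]
    | add z1 z2 h1 h2 =>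
      obtain ⟨x1, hx1⟩ := h1
      obtain ⟨x2, hx2⟩ := h2
      exact ⟨x1 + x2, by rw [map_add, hx1, hx2]⟩
  · -- kernel
    ext x
    simp only [LinearMap.mem_ker, Submodule.mem_comap, Submodule.subtype_apply]
    constructor
    · intro hx
      have h0 : LocalizedModule.mk (x : W) (1 : p0.primeCompl) = 0 := by
        rw [← dhComp_dhMap p0 M x, hx, map_zero]
      rw [← LocalizedModule.zero_mk (1 : p0.primeCompl), LocalizedModule.mk_eq] at h0
      obtain ⟨u, hu⟩ := h0
      simp only [one_smul, smul_zero] at hu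
      exact ⟨u, u.2, hu⟩
    · rintro ⟨a, ha, hax⟩
      rw [Submodule.mem_bot] at hax
      have hm : a • (x : W) ∈ M := by rw [hax]; exact M.zero_mem
      show dhFun p0 M x = 0
      rw [dhFun_spec p0 M x ha hm]
      have : (⟨a • (x : W), hm⟩ : M) = 0 := by ext; simp [hax]
      rw [this, TensorProduct.zero_tmul]
end

section
/- Let S be a unitary ring, let a be a central element of S, and let S'' be a unitary subring of S with aS ⊆ S''. Let M and N be left S-modules such that multiplication by a on N is injective, and let X be a subset of M. Then Hom_{(S'')}(X, N) = Hom_{(S)}(X, N); that is, a map ℓ : X → N satisfies ∑_i s_i ℓ(x_i) = 0 for all finite relations ∑_i s_i x_i = 0 with s_i ∈ S, x_i ∈ X, if and only if it satisfies the corresponding condition for all relations with coefficients in S''. -/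
/-- `IsQuasiHomSub S S'' X ℓ` is the analogous condition `Hom_{(S'')}(X, N)` where the
coefficients are taken in the subring `S''` of `S`, i.e. `M` and `N` are regarded as
`S''`-modules by restriction of scalars. -/
def IsQuasiHomSub (S : Type*) [Ring S] {M N : Type*} [AddCommGroup M] [Module S M]
    [AddCommGroup N] [Module S N] (S'' : Subring S) (X : Set M) (ℓ : X → N) : Prop :=
  ∀ (n : ℕ) (s : Fin n → S'') (x : Fin n → X),
    ∑ i, (s i : S) • (x i : M) = 0 → ∑ i, (s i : S) • ℓ (x i) = 0

/-- Let `S` be a unitary ring, `a` a central element of `S`, and `S''`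
a unitary subring of `S` with `a·S ⊆ S''`.  Let `M` and `N` be left `S`-modules such
that multiplication by `a` on `N` is injective, and let `X ⊆ M` be a subset.  Then
`Hom_{(S'')}(X, N) = Hom_{(S)}(X, N)`. -/
theorem statement12 (S M N : Type*) [Ring S] [AddCommGroup M] [Module S M]
    [AddCommGroup N] [Module S N] (a : S) (ha : ∀ s : S, a * s = s * a)
    (S'' : Subring S) (haS : ∀ s : S, a * s ∈ S'')
    (hinj : Function.Injective fun n : N => a • n)
    (X : Set M) (ℓ : X → N) :
    IsQuasiHomSub S S'' X ℓ ↔ IsQuasiHom S X ℓ := by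
  constructor
  · intro h n s x hx
    have h0 : ∑ i, ((⟨a * s i, haS (s i)⟩ : S'') : S) • (x i : M) = 0 := by
      simp only [mul_smul]
      rw [← Finset.smul_sum, hx, smul_zero]
    have := h n (fun i => ⟨a * s i, haS (s i)⟩) x h0
    apply hinj
    simpa only [mul_smul, Finset.smul_sum, smul_zero] using this
  · intro h n s x hx
    exact h n (fun i => (s i : S)) x hx
end

section
/- Let O be a discrete valuation ring with maximal ideal m, let V be a finitely generated free O-module, let Δ ⊆ V be an O-submodule, and let i ≥ 0 be an integer. Suppose that every O-linear map f : V → O with f(Δ) ⊆ m^{i+1} satisfies f(V) ⊆ m. Then m^i V ⊆ Δ. -/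
/-- Let `O` be a discrete valuation ring with maximal ideal `m`, let
`V` be a finitely generated free `O`-module, let `Δ ⊆ V` be an `O`-submodule and `i ≥ 0`
an integer.  If every `O`-linear map `f : V → O` with `f(Δ) ⊆ m^(i+1)` satisfies
`f(V) ⊆ m`, then `m^i V ⊆ Δ`. -/
theorem statement13 (O : Type*) [CommRing O] [IsDomain O] [IsDiscreteValuationRing O]
    (V : Type*) [AddCommGroup V] [Module O V] [Module.Free O V] [Module.Finite O V]
    (Δ : Submodule O V) (i : ℕ)
    (h : ∀ f : V →ₗ[O] O,
      (∀ x ∈ Δ, f x ∈ (IsLocalRing.maximalIdeal O) ^ (i + 1)) →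
      ∀ v : V, f v ∈ IsLocalRing.maximalIdeal O) :
    (IsLocalRing.maximalIdeal O) ^ i • (⊤ : Submodule O V) ≤ Δ := by
  classical
  obtain ⟨ϖ, hϖ⟩ := IsDiscreteValuationRing.exists_irreducible O
  have hm : IsLocalRing.maximalIdeal O = Ideal.span {ϖ} :=
    (IsDiscreteValuationRing.irreducible_iff_uniformizer ϖ).mp hϖ
  set b := Module.Free.chooseBasis O V with hb
  obtain ⟨n, snf⟩ := Δ.smithNormalForm b
  have hone : (1 : O) ∉ IsLocalRing.maximalIdeal O := by
    intro h1
    exact (IsLocalRing.maximalIdeal.isMaximal O).ne_top (Ideal.eq_top_of_isUnit_mem _ h1 isUnit_one)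
  -- every index is in the range of snf.f
  have hsurj : Function.Surjective snf.f := by
    intro j
    by_contra hj
    have hΔ : ∀ x ∈ Δ, snf.bM.coord j x ∈ (IsLocalRing.maximalIdeal O) ^ (i + 1) := by
      intro x hx
      have := snf.repr_eq_zero_of_notMem_range (⟨x, hx⟩ : Δ) (by simpa using hj)
      simpa [Module.Basis.coord_apply, this] using Ideal.zero_mem _
    have := h (snf.bM.coord j) hΔ (snf.bM j)
    rw [Module.Basis.coord_apply, Module.Basis.repr_self] at this
    simp at this
  -- every diagonal entry divides ϖ^i
  have hdvd : ∀ k : Fin n, snf.a k ∣ ϖ ^ i := by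
    intro k
    have hka : snf.a k ∉ (IsLocalRing.maximalIdeal O) ^ (i + 1) := by
      intro hka
      have hΔ : ∀ x ∈ Δ, snf.bM.coord (snf.f k) x ∈ (IsLocalRing.maximalIdeal O) ^ (i + 1) := by
        intro x hx
        have := snf.repr_apply_embedding_eq_repr_smul (⟨x, hx⟩ : Δ) (i := k)
        rw [Module.Basis.coord_apply]
        show snf.bM.repr ((⟨x, hx⟩ : Δ) : V) (snf.f k) ∈ _
        rw [this, map_smul]
        exact Ideal.mul_mem_right _ _ hka
      have := h (snf.bM.coord (snf.f k)) hΔ (snf.bM (snf.f k))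
      rw [Module.Basis.coord_apply, Module.Basis.repr_self] at this
      simp at this
    have hane : snf.a k ≠ 0 := by
      intro h0
      have := snf.snf k
      rw [h0, zero_smul] at this
      exact snf.bN.ne_zero k (Subtype.ext this)
    obtain ⟨m, u, hu⟩ := IsDiscreteValuationRing.eq_unit_mul_pow_irreducible hane hϖ
    have hmi : m ≤ i := by
      by_contra hmi
      push_neg at hmi
      apply hka
      rw [hm, Ideal.span_singleton_pow, Ideal.mem_span_singleton, hu]
      exact Dvd.dvd.mul_left (pow_dvd_pow ϖ hmi) _
    refine ⟨(u⁻¹ : Oˣ) * ϖ ^ (i - m), ?_⟩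
    rw [hu, show (i : ℕ) = m + (i - m) by omega, pow_add]
    calc ϖ ^ m * ϖ ^ (i - m) = ((u * u⁻¹ : Oˣ) : O) * (ϖ ^ m * ϖ ^ (i - m)) := by simp
    _ = ↑u * ϖ ^ m * (↑u⁻¹ * ϖ ^ (i - m)) := by push_cast; ring
    _ = ↑u * ϖ ^ m * (↑u⁻¹ * ϖ ^ (m + (i - m) - m)) := by rw [show m + (i - m) - m = i - m by omega]
  -- ϖ^i • (basis vector) ∈ Δ
  have hbasis : ∀ j, ϖ ^ i • snf.bM j ∈ Δ := by
    intro j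
    obtain ⟨k, rfl⟩ := hsurj j
    obtain ⟨c, hc⟩ := hdvd k
    rw [hc, mul_comm, mul_smul, ← snf.snf k]
    exact Submodule.smul_mem _ _ (snf.bN k).2
  have hall : ∀ v : V, ϖ ^ i • v ∈ Δ := by
    have : (⊤ : Submodule O V) ≤ Δ.comap (ϖ ^ i • (LinearMap.id : V →ₗ[O] V)) := by
      rw [← snf.bM.span_eq]
      rw [Submodule.span_le]
      rintro _ ⟨j, rfl⟩
      simpa using hbasis j
    intro v
    simpa using this (Submodule.mem_top (x := v))
  rw [Submodule.smul_le]
  intro r hr v _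
  rw [hm, Ideal.span_singleton_pow, Ideal.mem_span_singleton] at hr
  obtain ⟨c, rfl⟩ := hr
  rw [mul_comm, mul_smul]
  exact Submodule.smul_mem _ _ (hall v)
end
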